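/- arXiv:2105.04163 — 9 statements merged into one kernel-verified Lean document; each statement's English description precedes it below -/
import Mathlib

section
/- Assume a₂t² + b₂t + c₂ > 0 for all t ∈ ℝ. If d̂ = a₁b₂ − a₂b₁ ≠ 0, then ê² − 4·d̂·f̂ > 0, where ê = 2(a₁c₂ − a₂c₁) and f̂ = b₁c₂ − b₂c₁; consequently the quadratic d̂t² + êt + f̂ has two distinct real roots (−ê − √(ê²−4d̂f̂))/(2d̂) and (−ê + √(ê²−4d̂f̂))/(2d̂). -/
/-!
A quadratic that is positive on all of `ℝ` has negative discriminant, and its leading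
coefficient `a₂` cannot vanish when `d̂ ≠ 0` (otherwise `b₂ = 0` as well, forcing `d̂ = 0`).
The discriminant of `d̂t² + êt + f̂` then satisfies
`a₂² (ê² − 4d̂f̂) = X² − discrim a₂ b₂ c₂ · d̂²` for an explicit polynomial `X`,
and the right-hand side is positive. The two roots come from the quadratic formula.
-/

theorem sq_mul_discrim_eq {R : Type*} [CommRing R] (a₁ b₁ c₁ a₂ b₂ c₂ : R) :
    a₂ ^ 2 * discrim (a₁ * b₂ - a₂ * b₁) (2 * (a₁ * c₂ - a₂ * c₁)) (b₁ * c₂ - b₂ * c₁) =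
      (a₁ * b₂ ^ 2 - 2 * a₁ * a₂ * c₂ - a₂ * b₁ * b₂ + 2 * a₂ ^ 2 * c₁) ^ 2 -
        discrim a₂ b₂ c₂ * (a₁ * b₂ - a₂ * b₁) ^ 2 := by
  simp only [discrim]; ring

section OrderedField

variable {K : Type*} [Field K] [LinearOrder K] [IsStrictOrderedRing K]

theorem linear_coeff_eq_zero_of_forall_pos {b c : K} (h : ∀ t : K, 0 < b * t + c) : b = 0 := by
  have hdisc : discrim 0 b c ≤ 0 := discrim_le_zero fun t ↦ by simpa using (h t).le
  exact pow_eq_zero_iff two_ne_zero |>.mp <| le_antisymm (by simpa [discrim] using hdisc) (sq_nonneg b)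

theorem discrim_pos_of_forall_denom_pos {a₁ b₁ c₁ a₂ b₂ c₂ : K}
    (hden : ∀ t : K, 0 < a₂ * t ^ 2 + b₂ * t + c₂) (hd : a₁ * b₂ - a₂ * b₁ ≠ 0) :
    0 < discrim (a₁ * b₂ - a₂ * b₁) (2 * (a₁ * c₂ - a₂ * c₁)) (b₁ * c₂ - b₂ * c₁) := by
  have ha₂ : a₂ ≠ 0 := by
    rintro rfl
    have hb₂ : b₂ = 0 := linear_coeff_eq_zero_of_forall_pos fun t ↦ by simpa using hden t
    exact hd (by simp [hb₂])
  have hden_neg : discrim a₂ b₂ c₂ < 0 := discrim_lt_zero ha₂ fun t ↦ by simpa [sq] using hden t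
  have hpos : 0 < a₂ ^ 2 * discrim (a₁ * b₂ - a₂ * b₁) (2 * (a₁ * c₂ - a₂ * c₁))
      (b₁ * c₂ - b₂ * c₁) := by
    rw [sq_mul_discrim_eq, sub_eq_add_neg, ← neg_mul]
    exact add_pos_of_nonneg_of_pos (sq_nonneg _) (mul_pos (neg_pos.mpr hden_neg) (by positivity))
  exact pos_of_mul_pos_right hpos (sq_nonneg a₂)

end OrderedField

theorem quadratic_eq_zero_of_eq_root {a b c x : ℝ} (ha : a ≠ 0) (h : 0 ≤ discrim a b c)
    (hx : x = (-b + √(discrim a b c)) / (2 * a) ∨ x = (-b - √(discrim a b c)) / (2 * a)) :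
    a * x ^ 2 + b * x + c = 0 := by
  rw [sq]
  exact (quadratic_eq_zero_iff ha (Real.mul_self_sqrt h).symm x).mpr hx

theorem quadratic_roots_ne {a b c : ℝ} (ha : a ≠ 0) (h : 0 < discrim a b c) :
    (-b - √(discrim a b c)) / (2 * a) ≠ (-b + √(discrim a b c)) / (2 * a) := by
  rw [Ne, div_left_inj' (mul_ne_zero two_ne_zero ha)]
  linarith [Real.sqrt_pos.mpr h]

/-- If the denominator quadratic `a₂t² + b₂t + c₂` is everywhere positive and
`d̂ = a₁b₂ − a₂b₁ ≠ 0`, then the discriminant `ê² − 4d̂f̂` of the numerator of the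
derivative of `R(t) = (a₁t²+b₁t+c₁)/(a₂t²+b₂t+c₂)` is positive, and the quadratic
`d̂t² + êt + f̂` has the two distinct real roots `(−ê ∓ √(ê²−4d̂f̂))/(2d̂)`. -/
theorem stmt1 (a₁ b₁ c₁ a₂ b₂ c₂ : ℝ)
    (hden : ∀ t : ℝ, 0 < a₂ * t ^ 2 + b₂ * t + c₂)
    (dhat ehat fhat : ℝ)
    (hd : dhat = a₁ * b₂ - a₂ * b₁)
    (he : ehat = 2 * (a₁ * c₂ - a₂ * c₁))
    (hf : fhat = b₁ * c₂ - b₂ * c₁)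
    (hdne : dhat ≠ 0) :
    0 < ehat ^ 2 - 4 * dhat * fhat ∧
    (let t₁ : ℝ := (-ehat - Real.sqrt (ehat ^ 2 - 4 * dhat * fhat)) / (2 * dhat)
     let t₂ : ℝ := (-ehat + Real.sqrt (ehat ^ 2 - 4 * dhat * fhat)) / (2 * dhat)
     dhat * t₁ ^ 2 + ehat * t₁ + fhat = 0 ∧
     dhat * t₂ ^ 2 + ehat * t₂ + fhat = 0 ∧
     t₁ ≠ t₂) := by
  have hdisc : 0 < discrim dhat ehat fhat := by
    subst hd he hf
    exact discrim_pos_of_forall_denom_pos hden hdne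
  exact ⟨hdisc, quadratic_eq_zero_of_eq_root hdne hdisc.le (Or.inr rfl),
    quadratic_eq_zero_of_eq_root hdne hdisc.le (Or.inl rfl), quadratic_roots_ne hdne hdisc⟩
end

section
/- Let K ≥ 1 and let −π < l₁ ≤ u₁ < l₂ ≤ u₂ < … < l_K ≤ u_K < π, and set F = ⋃_{i=1}^{K}[l_i, u_i]. Let φ_g ∈ [−π, π] be a point at which χ attains its maximum over [−π, π]. Then the maximum of χ over F is attained as follows: (i) if φ_g ∈ F, then χ(y) ≤ χ(φ_g) for all y ∈ F; (ii) if φ_g ∉ [l₁, u_K], then χ(y) ≤ max(χ(l₁), χ(u_K)) for all y ∈ F; (iii) otherwise (φ_g ∈ [l₁, u_K] but φ_g ∉ F), letting r* be the largest index r with u_r < φ_g, one has χ(y) ≤ max(χ(l₁), χ(u_{r*}), χ(l_{r*+1}), χ(u_K)) for all y ∈ F. -/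
/-!
Since the denominator is positive, `t ≤ χ y` is equivalent to
`‖w‖ cos (y + arg w) + (b - t d) ≥ 0` with `w = a - t c`, so every superlevel set of `χ` is an arc
of the circle `ℝ/2πℤ`. On a stretch `[s, e]` of `[-π, π]` not containing the global maximizer
`φ_g` in its interior, the superlevel set `{χ ≥ χ y}` of a point `y ∈ [s, e]` is an arc through `y`
and `φ_g`, so it contains `s` or `e`. Each part of the theorem applies this to the stretch
`[l₁, u_K]`, `[l₁, u_{r*}]` or `[l_{r*+1}, u_K]` containing `y`.
-/

open Set Real Function

theorem cos_le_cos_iff_exists_abs_sub_le {A z : ℝ} (hA₀ : 0 ≤ A) (hA : A ≤ π) :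
    cos A ≤ cos z ↔ ∃ k : ℤ, |z - 2 * π * k| ≤ A := by
  have hcos : ∀ k : ℤ, cos z = cos |z - 2 * π * k| := fun k => by
    rw [cos_abs, show z - 2 * π * k = z - k * (2 * π) by ring, cos_sub_int_mul_two_pi]
  constructor
  · intro h
    refine ⟨round (z / (2 * π)), ?_⟩
    have hπ : 0 < 2 * π := by positivity
    have hk : |z - 2 * π * round (z / (2 * π))| ≤ π := by
      have h := abs_sub_round (z / (2 * π))
      rw [show z - 2 * π * round (z / (2 * π)) = 2 * π * (z / (2 * π) - round (z / (2 * π))) by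
        field_simp, abs_mul, abs_of_pos hπ]
      nlinarith
    rw [hcos (round (z / (2 * π)))] at h
    exact (strictAntiOn_cos.le_iff_ge ⟨hA₀, hA⟩ ⟨abs_nonneg _, hk⟩).1 h
  · rintro ⟨k, hk⟩
    rw [hcos k]
    exact cos_le_cos_of_nonneg_of_le_pi (abs_nonneg _) hA hk

/-- Every superlevel set of `f` is an arc of `ℝ/2πℤ`, expressed on windows `[p, p + 2π]`. -/
def QuasiconcaveOnCircle (f : ℝ → ℝ) : Prop :=
  ∀ ⦃t p q r x : ℝ⦄, p < q → q < r → r ≤ x → x ≤ p + 2 * π →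
    t ≤ f p → t ≤ f r → t ≤ f q ∨ t ≤ f x

theorem quasiconcaveOnCircle_cos : QuasiconcaveOnCircle cos := by
  intro t p q r x hpq hqr hrx hxp hp hr
  refine or_iff_not_imp_left.2 fun hq => ?_
  have ht₁ : -1 < t := (neg_one_le_cos q).trans_lt (not_le.1 hq)
  have ht₂ : t ≤ 1 := hp.trans (cos_le_one p)
  obtain ⟨A, hA₀, hA, rfl⟩ : ∃ A, 0 ≤ A ∧ A < π ∧ cos A = t :=
    ⟨arccos t, arccos_nonneg t, arccos_lt_pi.2 ht₁, cos_arccos ht₁.le ht₂⟩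
  simp only [cos_le_cos_iff_exists_abs_sub_le hA₀ hA.le, abs_le] at hp hr hq ⊢
  obtain ⟨m, hm⟩ := hp
  obtain ⟨n, hn⟩ := hr
  -- `q` separates the arcs around `2πm` and `2πn`, which therefore are consecutive
  have hmn : m < n := by
    by_contra! hnm
    have : (n : ℝ) ≤ m := by exact_mod_cast hnm
    exact hq ⟨m, by constructor <;> nlinarith [pi_pos]⟩
  have hnm : n < m + 2 := by
    by_contra! hnm
    have : (m : ℝ) + 2 ≤ n := by exact_mod_cast hnm
    nlinarith [pi_pos]
  have : (n : ℝ) = m + 1 := by exact_mod_cast (by omega : n = m + 1)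
  exact ⟨n, by constructor <;> nlinarith [pi_pos]⟩

namespace QuasiconcaveOnCircle

variable {f : ℝ → ℝ}

theorem comp_add_const (hf : QuasiconcaveOnCircle f) (θ : ℝ) :
    QuasiconcaveOnCircle fun z => f (z + θ) :=
  fun _ _ _ _ _ hpq hqr hrx hxp =>
    hf (by linarith : _ + θ < _ + θ) (by linarith : _ + θ < _ + θ) (by linarith : _ + θ ≤ _ + θ)
      (by linarith)

theorem monotone_comp (hf : QuasiconcaveOnCircle f) {g : ℝ → ℝ} (hg : Monotone g) :
    QuasiconcaveOnCircle (g ∘ f) := by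
  intro t p q r x hpq hqr hrx hxp hp hr
  have hmin : t ≤ g (min (f p) (f r)) := by
    rcases min_choice (f p) (f r) with h | h <;> rw [h] <;> assumption
  exact (hf hpq hqr hrx hxp (min_le_left _ _) (min_le_right _ _)).imp
    (fun h => hmin.trans (hg h)) (fun h => hmin.trans (hg h))

theorem le_max_of_mem_Icc (hf : QuasiconcaveOnCircle f) (hper : Periodic f (2 * π))
    {m s y e : ℝ} (hy : y ∈ Icc s e) (hm : m ≤ s ∨ e ≤ m) (he : e ≤ m + 2 * π)
    (hs : m ≤ s + 2 * π) (hmax : f y ≤ f m) : f y ≤ max (f s) (f e) := by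
  rcases hm with hm | hm
  · rcases hm.lt_or_eq with hm | rfl
    · rcases hy.1.lt_or_eq with hsy | rfl
      · exact (hf hm hsy hy.2 he hmax le_rfl).elim le_max_of_le_left le_max_of_le_right
      · exact le_max_left _ _
    · exact hmax.trans (le_max_left _ _)
  · rcases hm.lt_or_eq with hm | rfl
    · rcases hy.2.lt_or_eq with hye | rfl
      · have := hf hye hm hs (by linarith [hy.1]) le_rfl hmax
        rw [hper s] at this
        exact this.elim le_max_of_le_right le_max_of_le_left
      · exact le_max_right _ _
    · exact hmax.trans (le_max_right _ _)

end QuasiconcaveOnCircle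

theorem re_mul_exp_I_mul (w : ℂ) (z : ℝ) :
    (w * Complex.exp (Complex.I * z)).re = ‖w‖ * cos (z + Complex.arg w) := by
  conv_lhs => rw [← Complex.norm_mul_exp_arg_mul_I w]
  rw [mul_assoc, ← Complex.exp_add, mul_comm Complex.I, ← add_mul, ← Complex.ofReal_add,
    Complex.re_ofReal_mul, Complex.exp_ofReal_mul_I_re, add_comm]

theorem quasiconcaveOnCircle_re_mul_exp_add (w : ℂ) (γ : ℝ) :
    QuasiconcaveOnCircle fun z : ℝ => (w * Complex.exp (Complex.I * z)).re + γ := by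
  simp only [re_mul_exp_I_mul]
  exact (quasiconcaveOnCircle_cos.comp_add_const _).monotone_comp
    (g := fun s => ‖w‖ * s + γ) fun _ _ h => by dsimp only; gcongr

theorem quasiconcaveOnCircle_re_mul_exp_div {a c : ℂ} {b d : ℝ}
    (hpos : ∀ y : ℝ, 0 < (c * Complex.exp (Complex.I * y)).re + d) :
    QuasiconcaveOnCircle fun y : ℝ => ((a * Complex.exp (Complex.I * y)).re + b) /
      ((c * Complex.exp (Complex.I * y)).re + d) := by
  intro t p q r x hpq hqr hrx hxp
  have hlevel : ∀ y : ℝ, t ≤ ((a * Complex.exp (Complex.I * y)).re + b) /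
      ((c * Complex.exp (Complex.I * y)).re + d) ↔
      0 ≤ ((a - t * c) * Complex.exp (Complex.I * y)).re + (b - t * d) := fun y => by
    rw [le_div_iff₀ (hpos y), sub_mul, Complex.sub_re, mul_assoc, Complex.re_ofReal_mul]
    constructor <;> intro h <;> linarith
  simp only [hlevel]
  exact quasiconcaveOnCircle_re_mul_exp_add _ _ hpq hqr hrx hxp

theorem periodic_re_mul_exp_div (a c : ℂ) (b d : ℝ) :
    Periodic (fun y : ℝ => ((a * Complex.exp (Complex.I * y)).re + b) /
      ((c * Complex.exp (Complex.I * y)).re + d)) (2 * π) := fun y => by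
  simp only [Complex.ofReal_add, mul_add, Complex.ofReal_mul, Complex.ofReal_ofNat]
  rw [show Complex.I * (2 * π) = 2 * π * Complex.I by ring, Complex.exp_periodic]

section OrderedIntervals

variable {ι α : Type*} [PartialOrder ι] [Preorder α] {l u : ι → α}

theorem monotone_left_of_ordered_Icc (hlu : ∀ i, l i ≤ u i) (hord : ∀ i j, i < j → u i < l j) :
    Monotone l :=
  StrictMono.monotone fun i j h => (hlu i).trans_lt (hord i j h)

theorem monotone_right_of_ordered_Icc (hlu : ∀ i, l i ≤ u i)
    (hord : ∀ i j, i < j → u i < l j) : Monotone u :=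
  StrictMono.monotone fun i j h => (hord i j h).trans_le (hlu j)

theorem mem_Icc_of_mem_iUnion_ordered_Icc (hlu : ∀ i, l i ≤ u i)
    (hord : ∀ i j, i < j → u i < l j) {i₀ i₁ : ι} (h₀ : ∀ i, i₀ ≤ i) (h₁ : ∀ i, i ≤ i₁) {y : α}
    (hy : y ∈ ⋃ i, Icc (l i) (u i)) : y ∈ Icc (l i₀) (u i₁) := by
  obtain ⟨i, hyl, hyu⟩ := mem_iUnion.1 hy
  exact ⟨(monotone_left_of_ordered_Icc hlu hord (h₀ i)).trans hyl,
    hyu.trans (monotone_right_of_ordered_Icc hlu hord (h₁ i))⟩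

theorem le_or_le_of_mem_iUnion_ordered_Icc (hlu : ∀ i, l i ≤ u i)
    (hord : ∀ i j, i < j → u i < l j) {r r' : ι} (hrr' : ∀ i, i ≤ r ∨ r' ≤ i) {y : α}
    (hy : y ∈ ⋃ i, Icc (l i) (u i)) : y ≤ u r ∨ l r' ≤ y := by
  obtain ⟨i, hyl, hyu⟩ := mem_iUnion.1 hy
  exact (hrr' i).imp (fun h => hyu.trans (monotone_right_of_ordered_Icc hlu hord h))
    (fun h => (monotone_left_of_ordered_Icc hlu hord h).trans hyl)

end OrderedIntervals

/-- Optimization of `χ(y) = (Re(a e^{iy})+b)/(Re(c e^{iy})+d)` over a finite union of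
disjoint ordered closed intervals `F = ⋃ [lᵢ, uᵢ] ⊆ (−π, π)`: if the global maximizer
`φ_g` over `[−π,π]` is feasible it solves the problem; if it lies outside `[l₁, u_K]`
the solution is among the two extreme interval endpoints; otherwise it is among
`{l₁, u_{r*}, l_{r*+1}, u_K}` where `r*` is the largest index with `u_{r*} < φ_g`. -/
theorem stmt2 (a c : ℂ) (b d : ℝ)
    (χ : ℝ → ℝ)
    (hχ : χ = fun y : ℝ => ((a * Complex.exp (Complex.I * (y : ℂ))).re + b) /
                        ((c * Complex.exp (Complex.I * (y : ℂ))).re + d))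
    (hpos : ∀ y : ℝ, 0 < (c * Complex.exp (Complex.I * (y : ℂ))).re + d)
    (K : ℕ) (hK : 0 < K) (l u : Fin K → ℝ)
    (hlu : ∀ i, l i ≤ u i)
    (hord : ∀ i j : Fin K, i < j → u i < l j)
    (hleft : -Real.pi < l ⟨0, hK⟩) (hright : u ⟨K - 1, by omega⟩ < Real.pi)
    (F : Set ℝ) (hF : F = ⋃ i : Fin K, Icc (l i) (u i))
    (φg : ℝ) (hφg : φg ∈ Icc (-Real.pi) Real.pi)
    (hmax : ∀ y ∈ Icc (-Real.pi) Real.pi, χ y ≤ χ φg) :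
    (φg ∈ F → ∀ y ∈ F, χ y ≤ χ φg) ∧
    (φg ∉ Icc (l ⟨0, hK⟩) (u ⟨K - 1, by omega⟩) →
      ∀ y ∈ F, χ y ≤ max (χ (l ⟨0, hK⟩)) (χ (u ⟨K - 1, by omega⟩))) ∧
    (φg ∈ Icc (l ⟨0, hK⟩) (u ⟨K - 1, by omega⟩) → φg ∉ F →
      ∀ r : Fin K, u r < φg → (∀ r' : Fin K, u r' < φg → r' ≤ r) →
        ∀ hr : r.val + 1 < K,
          ∀ y ∈ F, χ y ≤ max (max (χ (l ⟨0, hK⟩)) (χ (u r)))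
                            (max (χ (l ⟨r.val + 1, hr⟩)) (χ (u ⟨K - 1, by omega⟩)))) := by
  have hqc : QuasiconcaveOnCircle χ := hχ ▸ quasiconcaveOnCircle_re_mul_exp_div hpos
  have hper : Periodic χ (2 * π) := hχ ▸ periodic_re_mul_exp_div a c b d
  have hbound : ∀ y ∈ F, y ∈ Icc (l ⟨0, hK⟩) (u ⟨K - 1, by omega⟩) := fun y hy =>
    mem_Icc_of_mem_iUnion_ordered_Icc hlu hord (fun _ => Fin.le_def.2 (Nat.zero_le _))
      (fun i => Fin.le_def.2 (Nat.le_sub_one_of_lt i.isLt)) (hF ▸ hy)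
  have hbound_pi : ∀ y ∈ F, y ∈ Icc (-π) π := fun y hy =>
    ⟨by linarith [(hbound y hy).1], by linarith [(hbound y hy).2]⟩
  have hendpoints : ∀ {s y e}, -π ≤ s → e ≤ π → y ∈ Icc s e → φg ≤ s ∨ e ≤ φg →
      χ y ≤ max (χ s) (χ e) := fun hs he hy hm =>
    hqc.le_max_of_mem_Icc hper hy hm (by linarith [hφg.1]) (by linarith [hφg.2])
      (hmax _ ⟨by linarith [hy.1], by linarith [hy.2]⟩)
  refine ⟨fun _ y hy => hmax y (hbound_pi y hy),
    fun hout y hy => hendpoints hleft.le hright.le (hbound y hy) ?_,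
    fun _ hnF r hur hrmax hr y hy => ?_⟩
  · by_contra! h
    exact hout ⟨h.1.le, h.2.le⟩
  have hlφ : φg < l ⟨r + 1, hr⟩ := by
    by_contra! h
    have : φg ≤ u ⟨r + 1, hr⟩ := not_lt.1 fun h' => by simpa [Fin.le_def] using hrmax _ h'
    exact hnF (hF ▸ mem_iUnion.2 ⟨_, h, this⟩)
  rcases le_or_le_of_mem_iUnion_ordered_Icc hlu hord (r := r) (r' := ⟨r + 1, hr⟩)
    (fun i => by simp only [Fin.le_def]; omega) (hF ▸ hy) with h | h
  · exact le_max_of_le_left <| hendpoints hleft.le (by linarith [hφg.2])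
      ⟨(hbound y hy).1, h⟩ (Or.inr hur.le)
  · exact le_max_of_le_right <| hendpoints (by linarith [hφg.1]) hright.le
      ⟨h, (hbound y hy).2⟩ (Or.inl hlφ.le)
end

section
/- Let M ≥ 1 be an integer and G = {2πk/M : k ∈ ℤ}. Let T ≥ 1 and let l₁ ≤ u₁ < l₂ ≤ u₂ < … < l_T ≤ u_T be elements of G with −π ≤ l₁ and u_T < π, and set F = ⋃_{t=1}^{T}([l_t, u_t] ∩ G) (each block consists of all grid points between l_t and u_t). Let φ_g ∈ [−π, π] be a point at which χ attains its maximum over [−π, π]. Then the maximum of χ over the finite set F is attained as follows: (i) if l_q ≤ φ_g ≤ u_q for some index q, then χ(y) ≤ max(χ(φ_l), χ(φ_u)) for all y ∈ F, where φ_l = ⌊φ_g M/(2π)⌋·(2π/M) and φ_u = ⌈φ_g M/(2π)⌉·(2π/M); (ii) if φ_g ∉ [l₁, u_T], then χ(y) ≤ max(χ(l₁), χ(u_T)) for all y ∈ F; (iii) otherwise, letting r* be the largest index r with u_r < φ_g, one has χ(y) ≤ max(χ(l₁), χ(u_{r*}), χ(l_{r*+1}), χ(u_T)) for all y ∈ F.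 -/
/-!
Since the denominator is positive, `μ ≤ χ y` is equivalent to
`((a - μ c) e^{iy}).re + (b - μ d) ≥ 0`, i.e. to `R cos (y + θ) ≥ α` for suitable constants; so
every superlevel set of `χ` is a union of `2π`-translates of one closed arc. Consequently, if
`s ≤ y ≤ t` and no translate of the global maximiser `φg` lies in `(s, t)`, the arc through `y`
at level `χ y` must reach `s` or `t`, i.e. `χ y ≤ max (χ s) (χ t)`. The three cases use the
intervals `(φu - 2π, φl)` (into which every grid point can be moved by a multiple of `2π`),
`(l₁, u_T)`, and `(l₁, u_{r*})`, `(l_{r*+1}, u_T)`.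
-/

open Set Real

noncomputable def sinusoid (w : ℂ) (e : ℝ) (y : ℝ) : ℝ :=
  (w * Complex.exp (Complex.I * (y : ℂ))).re + e

lemma sinusoid_periodic (w : ℂ) (e : ℝ) : Function.Periodic (sinusoid w e) (2 * π) := by
  intro y
  have h : Complex.I * ((y + 2 * π : ℝ) : ℂ) = Complex.I * y + 2 * π * Complex.I := by
    push_cast; ring
  simp only [sinusoid, h, Complex.exp_add, Complex.exp_two_pi_mul_I, mul_one]

lemma sinusoid_eq_norm_mul_cos (w : ℂ) (e y : ℝ) :
    sinusoid w e y = ‖w‖ * cos (y + Complex.arg w) + e := by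
  have h : w * Complex.exp (Complex.I * y) =
      ‖w‖ * Complex.exp ((y + Complex.arg w : ℝ) * Complex.I) := by
    conv_lhs => rw [← Complex.norm_mul_exp_arg_mul_I w]
    rw [mul_assoc, ← Complex.exp_add]
    push_cast; ring_nf
  rw [sinusoid, h, Complex.re_ofReal_mul, Complex.exp_ofReal_mul_I_re]

lemma sinusoid_sub_mul (a c : ℂ) (b d μ y : ℝ) :
    sinusoid a b y - μ * sinusoid c d y = sinusoid (a - μ * c) (b - μ * d) y := by
  simp only [sinusoid, sub_mul, Complex.sub_re, mul_assoc, Complex.re_ofReal_mul]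
  ring

lemma le_cos_iff_exists_abs_sub_le {α x : ℝ} (hα₁ : -1 ≤ α) (hα₂ : α ≤ 1) :
    α ≤ cos x ↔ ∃ k : ℤ, |x - 2 * π * k| ≤ arccos α := by
  have hcos_arccos := cos_arccos hα₁ hα₂
  have hcos_abs (k : ℤ) : cos |x - 2 * π * k| = cos x := by
    rw [cos_abs, mul_comm, cos_sub_int_mul_two_pi]
  constructor
  · intro hx
    obtain ⟨k, hk⟩ : ∃ k : ℤ, x - 2 * π * k ∈ Ioc (-π) π := by
      refine ⟨toIocDiv two_pi_pos (-π) x, ?_⟩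
      have h := toIocMod_mem_Ioc two_pi_pos (-π) x
      rw [← self_sub_toIocDiv_zsmul, zsmul_eq_mul] at h
      exact ⟨by linarith [h.1], by linarith [h.2]⟩
    refine ⟨k, ?_⟩
    by_contra! hlt
    have := strictAntiOn_cos ⟨arccos_nonneg α, arccos_le_pi α⟩
      ⟨abs_nonneg _, abs_le.mpr ⟨hk.1.le, hk.2⟩⟩ hlt
    rw [hcos_abs, hcos_arccos] at this
    linarith
  · rintro ⟨k, hk⟩
    rw [← hcos_abs k, ← hcos_arccos]
    exact cos_le_cos_of_nonneg_of_le_pi (abs_nonneg _) (arccos_le_pi α) hk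

-- `s, y, t, p` lie in this cyclic order on `ℝ ⧸ 2πℤ`.
lemma le_cos_or_le_cos_of_cyclic {α s y t p : ℝ} (hsy : s ≤ y) (hyt : y ≤ t) (htp : t ≤ p)
    (hps : p ≤ s + 2 * π) (hy : α ≤ cos y) (hp : α ≤ cos p) : α ≤ cos s ∨ α ≤ cos t := by
  by_contra! h
  obtain ⟨hs, ht⟩ := h
  have hα₁ : -1 ≤ α := (neg_one_le_cos s).trans hs.le
  have hα₂ : α ≤ 1 := hy.trans (cos_le_one y)
  have far {x : ℝ} (hx : cos x < α) (k : ℤ) : arccos α < |x - 2 * π * k| := by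
    by_contra! h
    exact hx.not_ge ((le_cos_iff_exists_abs_sub_le hα₁ hα₂).2 ⟨k, h⟩)
  obtain ⟨k, hk⟩ := (le_cos_iff_exists_abs_sub_le hα₁ hα₂).1 hy
  obtain ⟨m, hm⟩ := (le_cos_iff_exists_abs_sub_le hα₁ hα₂).1 hp
  rw [abs_le] at hk hm
  have hsk : s - 2 * π * k < -arccos α := by
    rcases lt_abs.1 (far hs k) with h | h <;> linarith
  have htk : arccos α < t - 2 * π * k := by
    rcases lt_abs.1 (far ht k) with h | h <;> linarith
  rcases le_or_gt m k with hmk | hkm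
  · have : 2 * π * m ≤ 2 * π * k := by gcongr
    linarith
  · have : 2 * π * (k + 1) ≤ 2 * π * m := by gcongr; exact_mod_cast hkm
    linarith

lemma sinusoid_nonneg_or_nonneg_of_cyclic (w : ℂ) (e : ℝ) {s y t p : ℝ} (hsy : s ≤ y)
    (hyt : y ≤ t) (htp : t ≤ p) (hps : p ≤ s + 2 * π) (hy : 0 ≤ sinusoid w e y)
    (hp : 0 ≤ sinusoid w e p) : 0 ≤ sinusoid w e s ∨ 0 ≤ sinusoid w e t := by
  rcases eq_or_ne w 0 with rfl | hw
  · left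
    simpa [sinusoid] using hy
  have hR : 0 < ‖w‖ := norm_pos_iff.2 hw
  have key (x : ℝ) : 0 ≤ sinusoid w e x ↔ -e / ‖w‖ ≤ cos (x + Complex.arg w) := by
    rw [sinusoid_eq_norm_mul_cos, div_le_iff₀ hR]
    constructor <;> intro <;> linarith
  simp only [key] at hy hp ⊢
  exact le_cos_or_le_cos_of_cyclic (by linarith) (by linarith) (by linarith) (by linarith) hy hp

lemma Function.Periodic.le_of_forall_mem_Ico_le {α β : Type*} [AddCommGroup α] [LinearOrder α]
    [IsOrderedAddMonoid α] [Archimedean α] [Preorder β] {f : α → β} {c : α}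
    (hf : Function.Periodic f c) (hc : 0 < c) {a : α} {b : β}
    (hb : ∀ y ∈ Ico a (a + c), f y ≤ b) (x : α) : f x ≤ b := by
  obtain ⟨y, hy, hxy⟩ := hf.exists_mem_Ico hc x a
  exact hxy ▸ hb y hy

section Ratio

variable {a c : ℂ} {b d : ℝ} {χ : ℝ → ℝ}

lemma periodic_of_eq_div_sinusoid (hχ : χ = fun y => sinusoid a b y / sinusoid c d y) :
    Function.Periodic χ (2 * π) :=
  hχ ▸ (sinusoid_periodic a b).div (sinusoid_periodic c d)

lemma div_sinusoid_le_max_of_cyclic (hχ : χ = fun y => sinusoid a b y / sinusoid c d y)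
    (hpos : ∀ y, 0 < sinusoid c d y) {p : ℝ} (hmax : ∀ z, χ z ≤ χ p) {s y t : ℝ}
    (hsy : s ≤ y) (hyt : y ≤ t) (htp : t ≤ p) (hps : p ≤ s + 2 * π) :
    χ y ≤ max (χ s) (χ t) := by
  have key (μ x : ℝ) : μ ≤ χ x ↔ 0 ≤ sinusoid (a - μ * c) (b - μ * d) x := by
    rw [← sinusoid_sub_mul, sub_nonneg, hχ, le_div_iff₀ (hpos x)]
  rcases sinusoid_nonneg_or_nonneg_of_cyclic _ _ hsy hyt htp hps ((key _ y).1 le_rfl)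
    ((key _ p).1 (hmax y)) with h | h
  · exact le_max_of_le_left ((key _ s).2 h)
  · exact le_max_of_le_right ((key _ t).2 h)

lemma div_sinusoid_le_max_of_le_or_le (hχ : χ = fun y => sinusoid a b y / sinusoid c d y)
    (hpos : ∀ y, 0 < sinusoid c d y) {p : ℝ} (hp : p ∈ Icc (-π) π) (hmax : ∀ z, χ z ≤ χ p)
    {s y t : ℝ} (hs : -π ≤ s) (ht : t ≤ π) (hsy : s ≤ y) (hyt : y ≤ t) (hpst : p ≤ s ∨ t ≤ p) :
    χ y ≤ max (χ s) (χ t) := by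
  rcases hpst with hps | htp
  · refine div_sinusoid_le_max_of_cyclic hχ hpos (p := p + 2 * π) ?_ hsy hyt (by linarith [hp.1])
      (by linarith)
    simpa only [periodic_of_eq_div_sinusoid hχ p] using hmax
  · exact div_sinusoid_le_max_of_cyclic hχ hpos hmax hsy hyt htp (by linarith [hp.2])

lemma div_sinusoid_grid_le_max_floor_ceil (hχ : χ = fun y => sinusoid a b y / sinusoid c d y)
    (hpos : ∀ y, 0 < sinusoid c d y) {M : ℕ} (hM : 0 < M) {p : ℝ} (hmax : ∀ z, χ z ≤ χ p)
    (k : ℤ) :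
    χ (2 * π * k / M) ≤
      max (χ (⌊p * M / (2 * π)⌋ * (2 * π / M))) (χ (⌈p * M / (2 * π)⌉ * (2 * π / M))) := by
  have hper := periodic_of_eq_div_sinusoid hχ
  have hM' : (0 : ℝ) < M := by exact_mod_cast hM
  have hh : 0 < 2 * π / M := by positivity
  have hMh : (M : ℝ) * (2 * π / M) = 2 * π := by field_simp
  have hxh : p * M / (2 * π) * (2 * π / M) = p := by field_simp
  set x := p * M / (2 * π)
  set h := 2 * π / M
  -- the representative of `k` modulo `M` in `(⌊x⌋ - M, ⌊x⌋]`
  have hMZ : (0 : ℤ) < M := by exact_mod_cast hM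
  set k' := toIocMod hMZ (⌊x⌋ - M) k
  set j := toIocDiv hMZ (⌊x⌋ - M) k
  have hk' : k' + j * M = k := by rw [← smul_eq_mul, toIocMod_add_toIocDiv_zsmul]
  have hk'_mem := toIocMod_mem_Ioc hMZ (⌊x⌋ - M) k
  rw [sub_add_cancel] at hk'_mem
  have hceil : ⌈x⌉ - M ≤ k' := by linarith [Int.ceil_le_floor_add_one x, hk'_mem.1]
  have hχk : χ (2 * π * k / M) = χ (k' * h) := by
    rw [← hper.int_mul j (k' * h), ← hMh, ← hk']
    congr 1
    push_cast
    field_simp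
  rw [hχk, ← hper.sub_eq (⌈x⌉ * h), max_comm]
  refine div_sinusoid_le_max_of_cyclic hχ hpos hmax ?_ ?_ ?_ ?_
  · rw [← hMh, ← sub_mul]
    gcongr
    exact_mod_cast hceil
  · gcongr
    exact_mod_cast hk'_mem.2
  · rw [← hxh]
    gcongr
    exact Int.floor_le x
  · rw [sub_add_cancel, ← hxh]
    gcongr
    exact Int.le_ceil x

end Ratio

/-- Discrete-phase version: optimization of `χ(y) = (Re(a e^{iy})+b)/(Re(c e^{iy})+d)`
over a finite union of ordered blocks of grid points of `G = {2πk/M : k ∈ ℤ}`. If the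
global maximizer `φ_g` over `[−π,π]` lies inside some block `[l_q, u_q]`, the optimum is
among its two neighbouring grid points `φ_l, φ_u`; if `φ_g ∉ [l₁, u_T]` it is among
`{l₁, u_T}`; otherwise it is among `{l₁, u_{r*}, l_{r*+1}, u_T}` with `r*` the largest
index such that `u_{r*} < φ_g`. -/
theorem stmt3 (a c : ℂ) (b d : ℝ)
    (χ : ℝ → ℝ)
    (hχ : χ = fun y : ℝ => ((a * Complex.exp (Complex.I * (y : ℂ))).re + b) /
                        ((c * Complex.exp (Complex.I * (y : ℂ))).re + d))
    (hpos : ∀ y : ℝ, 0 < (c * Complex.exp (Complex.I * (y : ℂ))).re + d)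
    (M : ℕ) (hM : 1 ≤ M)
    (G : Set ℝ) (hG : G = {x : ℝ | ∃ k : ℤ, x = 2 * Real.pi * k / M})
    (T : ℕ) (hT : 0 < T) (l u : Fin T → ℝ)
    (hlu : ∀ t, l t ≤ u t)
    (hord : ∀ t t' : Fin T, t < t' → u t < l t')
    (hleft : -Real.pi ≤ l ⟨0, hT⟩) (hright : u ⟨T - 1, by omega⟩ < Real.pi)
    (F : Set ℝ) (hF : F = ⋃ t : Fin T, (Icc (l t) (u t) ∩ G))
    (φg : ℝ) (hφg : φg ∈ Icc (-Real.pi) Real.pi)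
    (hmax : ∀ y ∈ Icc (-Real.pi) Real.pi, χ y ≤ χ φg)
    (φl φu : ℝ)
    (hφl : φl = (⌊φg * M / (2 * Real.pi)⌋ : ℝ) * (2 * Real.pi / M))
    (hφu : φu = (⌈φg * M / (2 * Real.pi)⌉ : ℝ) * (2 * Real.pi / M)) :
    ((∃ q : Fin T, l q ≤ φg ∧ φg ≤ u q) →
      ∀ y ∈ F, χ y ≤ max (χ φl) (χ φu)) ∧
    (φg ∉ Icc (l ⟨0, hT⟩) (u ⟨T - 1, by omega⟩) →
      ∀ y ∈ F, χ y ≤ max (χ (l ⟨0, hT⟩)) (χ (u ⟨T - 1, by omega⟩))) ∧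
    ((¬ ∃ q : Fin T, l q ≤ φg ∧ φg ≤ u q) →
      φg ∈ Icc (l ⟨0, hT⟩) (u ⟨T - 1, by omega⟩) →
      ∀ r : Fin T, u r < φg → (∀ r' : Fin T, u r' < φg → r' ≤ r) →
        ∀ hr : r.val + 1 < T,
          ∀ y ∈ F, χ y ≤ max (max (χ (l ⟨0, hT⟩)) (χ (u r)))
                            (max (χ (l ⟨r.val + 1, hr⟩)) (χ (u ⟨T - 1, by omega⟩)))) := by
  have hχ' : χ = fun y => sinusoid a b y / sinusoid c d y := hχ
  have hglob : ∀ z, χ z ≤ χ φg :=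
    (periodic_of_eq_div_sinusoid hχ').le_of_forall_mem_Ico_le two_pi_pos (a := -π) fun y hy =>
      hmax y ⟨hy.1, by linarith [hy.2]⟩
  have hl : Monotone l := StrictMono.monotone fun t t' h => (hlu t).trans_lt (hord t t' h)
  have hu : Monotone u := StrictMono.monotone fun t t' h => (hord t t' h).trans_le (hlu t')
  have hl0 (t : Fin T) : l ⟨0, hT⟩ ≤ l t := hl (Nat.zero_le _)
  have huT (t : Fin T) : u t ≤ u ⟨T - 1, by omega⟩ := hu (Nat.le_sub_one_of_lt t.2)
  have hblock : ∀ y ∈ F, ∃ t, l t ≤ y ∧ y ≤ u t ∧ y ∈ G := by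
    subst hF
    simpa only [mem_iUnion, mem_inter_iff, mem_Icc, and_assoc] using fun _ => id
  refine ⟨fun _ y hy => ?_, fun hφ y hy => ?_, fun hnq _ r hur hrmax hr y hy => ?_⟩
  · obtain ⟨-, -, -, hyG⟩ := hblock y hy
    rw [hG] at hyG
    obtain ⟨k, rfl⟩ := hyG
    rw [hφl, hφu]
    exact div_sinusoid_grid_le_max_floor_ceil hχ' hpos hM hglob k
  · obtain ⟨t, hty, hyt, -⟩ := hblock y hy
    rw [mem_Icc, not_and_or, not_le, not_le] at hφ
    exact div_sinusoid_le_max_of_le_or_le hχ' hpos hφg hglob hleft hright.le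
      ((hl0 t).trans hty) (hyt.trans (huT t)) (hφ.imp le_of_lt le_of_lt)
  · have hφr : φg < l ⟨r.val + 1, hr⟩ := by
      by_contra! h
      exact Nat.not_succ_le_self r (hrmax _ (not_le.1 fun h' => hnq ⟨_, h, h'⟩))
    obtain ⟨t, hty, hyt, -⟩ := hblock y hy
    rcases le_or_gt t r with htr | hrt
    · exact le_max_of_le_left (div_sinusoid_le_max_of_le_or_le hχ' hpos hφg hglob hleft
        ((huT r).trans hright.le) ((hl0 t).trans hty) (hyt.trans (hu htr)) (Or.inr hur.le))
    · exact le_max_of_le_right (div_sinusoid_le_max_of_le_or_le hχ' hpos hφg hglob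
        (hleft.trans (hl0 _)) hright.le ((hl (show r.val + 1 ≤ t.val from hrt)).trans hty)
        (hyt.trans (huT t)) (Or.inl hφr.le))
end

section
/- Let N be a positive integer and f₁ ≤ f₂ real numbers. The N×N matrix R_I with entries R_I(i,l) = (f₂ − f₁)·e^{iπ(f₂+f₁)(i−l)}·sinc(π(f₂ − f₁)(i−l)) is Hermitian positive semidefinite: for every s ∈ ℂ^N, the quadratic form s† R_I s is a nonnegative real number. -/
/-!
Since `∫_{f₁}^{f₂} e^{2πi k f} df = (f₂ - f₁) e^{iπ(f₂+f₁)k} sinc(π(f₂ - f₁)k)`, the entry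
`R_I(i,l)` is the integral over `[f₁, f₂]` of `e_i(f) · conj (e_l(f))` with `e_i(f) = e^{2πi i f}`.
So `R_I` is a Gram matrix of integrals, and `s† R_I s = ∫_{f₁}^{f₂} |∑ᵢ conj(sᵢ) e_i(f)|² df ≥ 0`.
-/

open Matrix

noncomputable def sinc (x : ℝ) : ℝ := if x = 0 then 1 else Real.sin x / x

open Complex intervalIntegral
open scoped ComplexConjugate ComplexOrder Real

lemma two_mul_I_mul_sinc (x : ℝ) : 2 * x * I * (sinc x : ℂ) = exp (x * I) - exp (-(x * I)) := by
  unfold sinc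
  split_ifs with hx
  · simp [hx]
  · have hx' : (x : ℂ) ≠ 0 := ofReal_ne_zero.mpr hx
    push_cast
    field_simp
    have h := two_sin x
    rw [neg_mul] at h
    linear_combination I * h + (exp (-(x * I)) - exp (x * I)) * I_sq

lemma integral_exp_two_pi_I_mul (a b k : ℝ) :
    ∫ f in a..b, exp (2 * π * I * k * f) =
      (b - a) * exp (I * π * (b + a) * k) * (sinc (π * (b - a) * k) : ℂ) := by
  rcases eq_or_ne k 0 with rfl | hk
  · simp [sinc]
  have hc : (2 * π * I * k : ℂ) ≠ 0 := by simp [Real.pi_ne_zero, hk]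
  rw [integral_exp_mul_complex hc, div_eq_iff hc]
  have hsinc := two_mul_I_mul_sinc (π * (b - a) * k)
  push_cast at hsinc
  have hb : exp (2 * π * I * k * b) = exp (I * π * (b + a) * k) * exp (π * (b - a) * k * I) := by
    rw [← exp_add]; ring_nf
  have ha : exp (2 * π * I * k * a) = exp (I * π * (b + a) * k) * exp (-(π * (b - a) * k * I)) := by
    rw [← exp_add]; ring_nf
  rw [ha, hb]
  linear_combination (-exp (I * π * (b + a) * k)) * hsinc

lemma exp_two_pi_I_mul_mul_conj (m n f : ℝ) :
    exp (2 * π * I * m * f) * conj (exp (2 * π * I * n * f)) = exp (2 * π * I * (m - n) * f) := by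
  rw [← exp_conj, ← exp_add]
  simp only [map_mul, map_ofNat, conj_ofReal, conj_I]
  ring_nf

theorem posSemidef_of_eq_integral_mul_conj {ι : Type*} [Fintype ι] {a b : ℝ} (hab : a ≤ b)
    {v : ι → ℝ → ℂ} (hv : ∀ i, Continuous (v i)) {M : Matrix ι ι ℂ}
    (hM : ∀ i l, M i l = ∫ f in a..b, v i f * conj (v l f)) : M.PosSemidef := by
  refine .of_dotProduct_mulVec_nonneg ?_ fun s => ?_
  · ext i l
    rw [conjTranspose_apply, hM, hM, RCLike.star_def, ← intervalIntegral_conj]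
    simp [mul_comm]
  · set g : ℝ → ℂ := fun f => ∑ i, conj (s i) * v i f
    have hnormSq (f : ℝ) :
        (normSq (g f) : ℂ) = ∑ i, ∑ l, conj (s i) * s l * (v i f * conj (v l f)) := by
      rw [← mul_conj, map_sum, Finset.sum_mul_sum]
      simp only [map_mul, conj_conj]
      exact Finset.sum_congr rfl fun i _ => Finset.sum_congr rfl fun l _ => by ring
    have hquad : star s ⬝ᵥ (M *ᵥ s) = ∫ f in a..b, (normSq (g f) : ℂ) := by
      simp_rw [hnormSq]
      rw [integral_finsetSum fun i _ => ?_]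
      · simp only [dotProduct, mulVec, Finset.mul_sum]
        refine Finset.sum_congr rfl fun i _ => ?_
        rw [integral_finsetSum fun l _ => ?_]
        · refine Finset.sum_congr rfl fun l _ => ?_
          rw [integral_const_mul, ← hM]
          simp only [Pi.star_apply, RCLike.star_def]
          ring
        · exact (by fun_prop : Continuous _).intervalIntegrable _ _
      · exact (by fun_prop : Continuous _).intervalIntegrable _ _
    rw [hquad, intervalIntegral.integral_ofReal]
    exact zero_le_real.mpr (integral_nonneg hab fun _ _ => normSq_nonneg _)

theorem stmt5_general (N : ℕ) (f₁ f₂ : ℝ) (hf : f₁ ≤ f₂)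
    (RI : Matrix (Fin N) (Fin N) ℂ)
    (hRI : ∀ i l : Fin N, RI i l =
      (f₂ - f₁) * Complex.exp (Complex.I * Real.pi * (f₂ + f₁) * ((i : ℝ) - (l : ℝ)))
        * (sinc (Real.pi * (f₂ - f₁) * ((i : ℝ) - (l : ℝ))) : ℝ)) :
    RI.IsHermitian ∧
    ∀ s : Fin N → ℂ, (star s ⬝ᵥ RI.mulVec s).im = 0 ∧ 0 ≤ (star s ⬝ᵥ RI.mulVec s).re := by
  have hRI_integral (i l : Fin N) : RI i l =
      ∫ f in f₁..f₂, exp (2 * π * I * (i : ℝ) * f) * conj (exp (2 * π * I * (l : ℝ) * f)) := by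
    simp_rw [exp_two_pi_I_mul_mul_conj, ← ofReal_sub, integral_exp_two_pi_I_mul, hRI]
    push_cast
    ring
  have hpsd : RI.PosSemidef :=
    posSemidef_of_eq_integral_mul_conj hf (fun i => by fun_prop) hRI_integral
  refine ⟨hpsd.isHermitian, fun s => ?_⟩
  obtain ⟨hre, him⟩ := nonneg_iff.mp (hpsd.dotProduct_mulVec_nonneg s)
  exact ⟨him.symm, hre⟩

/-- The spectral-interference matrix `R_I` with entries
`R_I(i,l) = (f₂−f₁)·e^{iπ(f₂+f₁)(i−l)}·sinc(π(f₂−f₁)(i−l))` is Hermitian positive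
semidefinite: for every `s ∈ ℂ^N` the quadratic form `s† R_I s` is a nonnegative real. -/
theorem stmt5 (N : ℕ) (hN : 0 < N) (f₁ f₂ : ℝ) (hf : f₁ ≤ f₂)
    (RI : Matrix (Fin N) (Fin N) ℂ)
    (hRI : ∀ i l : Fin N, RI i l =
      (f₂ - f₁) * Complex.exp (Complex.I * Real.pi * (f₂ + f₁) * ((i : ℝ) - (l : ℝ)))
        * (sinc (Real.pi * (f₂ - f₁) * ((i : ℝ) - (l : ℝ))) : ℝ)) :
    RI.IsHermitian ∧
    ∀ s : Fin N → ℂ, (star s ⬝ᵥ RI.mulVec s).im = 0 ∧ 0 ≤ (star s ⬝ᵥ RI.mulVec s).re :=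
  stmt5_general N f₁ f₂ hf RI hRI
end

section
/- Assume a₂t² + b₂t + c₂ > 0 for all t ∈ ℝ, d̂ = 0 and ê ≠ 0, and set t₀ = −f̂/ê. If ê > 0, then R is strictly decreasing on (−∞, t₀] and strictly increasing on [t₀, ∞), so t₀ is the unique global minimizer of R on ℝ. If ê < 0, then R is strictly increasing on (−∞, t₀] and strictly decreasing on [t₀, ∞), so t₀ is the unique global maximizer of R on ℝ. -/
/-!
Writing `N/D` for `R`, the difference `R x - R y` factors as
`(x - y) (d̂ x y + (ê/2)(x + y) + f̂) / (D x D y)`. When `d̂ = 0` the middle factor is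
`(ê/2)(x + y - 2 t₀)`, so `R x - R y` has the sign of `ê (x - y)(x + y - 2 t₀)`: on either side of
`t₀` this fixes the direction of monotonicity, and `R t - R t₀` has the sign of `ê (t - t₀)²`.
-/

open Set

lemma quadratic_ratio_sub_quadratic_ratio {a₁ b₁ c₁ a₂ b₂ c₂ x y : ℝ}
    (hx : a₂ * x ^ 2 + b₂ * x + c₂ ≠ 0) (hy : a₂ * y ^ 2 + b₂ * y + c₂ ≠ 0) :
    (a₁ * x ^ 2 + b₁ * x + c₁) / (a₂ * x ^ 2 + b₂ * x + c₂) -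
        (a₁ * y ^ 2 + b₁ * y + c₁) / (a₂ * y ^ 2 + b₂ * y + c₂) =
      (x - y) * ((a₁ * b₂ - a₂ * b₁) * x * y + (a₁ * c₂ - a₂ * c₁) * (x + y) +
          (b₁ * c₂ - b₂ * c₁)) /
        ((a₂ * x ^ 2 + b₂ * x + c₂) * (a₂ * y ^ 2 + b₂ * y + c₂)) := by
  rw [div_sub_div _ _ hx hy]
  ring

section SymmetricValley

variable {f : ℝ → ℝ} {t₀ : ℝ} {g : ℝ → ℝ → ℝ}

lemma strictAntiOn_Iic_of_sub_eq_mul (hg : ∀ x y, 0 < g x y)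
    (hfg : ∀ x y, f x - f y = g x y * ((x - y) * (x + y - 2 * t₀))) :
    StrictAntiOn f (Iic t₀) := by
  intro x hx y hy hxy
  have hx : x ≤ t₀ := hx
  have hy : y ≤ t₀ := hy
  have : 0 < f x - f y := by
    rw [hfg]
    exact mul_pos (hg x y) (mul_pos_of_neg_of_neg (by linarith) (by linarith))
  linarith

lemma strictMonoOn_Ici_of_sub_eq_mul (hg : ∀ x y, 0 < g x y)
    (hfg : ∀ x y, f x - f y = g x y * ((x - y) * (x + y - 2 * t₀))) :
    StrictMonoOn f (Ici t₀) := by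
  intro x hx y hy hxy
  have hx : t₀ ≤ x := hx
  have hy : t₀ ≤ y := hy
  have : f x - f y < 0 := by
    rw [hfg]
    exact mul_neg_of_pos_of_neg (hg x y) (mul_neg_of_neg_of_pos (by linarith) (by linarith))
  linarith

lemma lt_of_ne_of_sub_eq_mul (hg : ∀ x y, 0 < g x y)
    (hfg : ∀ x y, f x - f y = g x y * ((x - y) * (x + y - 2 * t₀))) {t : ℝ} (ht : t ≠ t₀) :
    f t₀ < f t := by
  have : 0 < f t - f t₀ := by
    rw [hfg, show (t - t₀) * (t + t₀ - 2 * t₀) = (t - t₀) ^ 2 by ring]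
    exact mul_pos (hg t t₀) (sq_pos_of_ne_zero (sub_ne_zero.mpr ht))
  linarith

end SymmetricValley

/-- Monotonicity of `R(t) = (a₁t²+b₁t+c₁)/(a₂t²+b₂t+c₂)` when `d̂ = 0` and `ê ≠ 0`:
with `t₀ = −f̂/ê`, if `ê > 0` then `R` is strictly decreasing on `(−∞, t₀]` and strictly
increasing on `[t₀, ∞)`, so `t₀` is the unique global minimizer; if `ê < 0` the situation
is dual and `t₀` is the unique global maximizer. -/
theorem stmt10 (a₁ b₁ c₁ a₂ b₂ c₂ : ℝ)
    (hden : ∀ t : ℝ, 0 < a₂ * t ^ 2 + b₂ * t + c₂)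
    (R : ℝ → ℝ)
    (hR : R = fun t => (a₁ * t ^ 2 + b₁ * t + c₁) / (a₂ * t ^ 2 + b₂ * t + c₂))
    (dhat ehat fhat : ℝ)
    (hd : dhat = a₁ * b₂ - a₂ * b₁)
    (he : ehat = 2 * (a₁ * c₂ - a₂ * c₁))
    (hf : fhat = b₁ * c₂ - b₂ * c₁)
    (hd0 : dhat = 0) (he0 : ehat ≠ 0)
    (t₀ : ℝ) (ht₀ : t₀ = -fhat / ehat) :
    (0 < ehat →
      StrictAntiOn R (Set.Iic t₀) ∧ StrictMonoOn R (Set.Ici t₀) ∧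
      ∀ t : ℝ, t ≠ t₀ → R t₀ < R t) ∧
    (ehat < 0 →
      StrictMonoOn R (Set.Iic t₀) ∧ StrictAntiOn R (Set.Ici t₀) ∧
      ∀ t : ℝ, t ≠ t₀ → R t < R t₀) := by
  set D : ℝ → ℝ := fun t => a₂ * t ^ 2 + b₂ * t + c₂
  have hsub : ∀ x y, R x - R y = ehat / 2 / (D x * D y) * ((x - y) * (x + y - 2 * t₀)) := by
    intro x y
    have hft₀ : fhat = -(ehat * t₀) := by rw [ht₀]; field_simp
    rw [hR, quadratic_ratio_sub_quadratic_ratio (hden x).ne' (hden y).ne', ← hd, hd0,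
      show a₁ * c₂ - a₂ * c₁ = ehat / 2 by rw [he]; ring, ← hf, hft₀]
    ring
  have hDD : ∀ x y, 0 < D x * D y := fun x y => mul_pos (hden x) (hden y)
  refine ⟨fun hpos => ?_, fun hneg => ?_⟩
  · have hg : ∀ x y, 0 < ehat / 2 / (D x * D y) := fun x y =>
      div_pos (by linarith) (hDD x y)
    exact ⟨strictAntiOn_Iic_of_sub_eq_mul hg hsub, strictMonoOn_Ici_of_sub_eq_mul hg hsub,
      fun t ht => lt_of_ne_of_sub_eq_mul hg hsub ht⟩
  · have hg : ∀ x y, 0 < -ehat / 2 / (D x * D y) := fun x y =>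
      div_pos (by linarith) (hDD x y)
    have hsub' : ∀ x y, -R x - -R y = -ehat / 2 / (D x * D y) * ((x - y) * (x + y - 2 * t₀)) :=
      fun x y => by linear_combination -(hsub x y)
    refine ⟨by simpa using (strictAntiOn_Iic_of_sub_eq_mul hg hsub').neg,
      by simpa using (strictMonoOn_Ici_of_sub_eq_mul hg hsub').neg, fun t ht => ?_⟩
    simpa using lt_of_ne_of_sub_eq_mul (f := fun t => -R t) hg hsub' ht
end

section
/- Assume a₂t² + b₂t + c₂ > 0 for all t ∈ ℝ and d̂ > 0. Then Δ = ê² − 4d̂f̂ > 0, and letting t_g = (−ê − √Δ)/(2d̂) and t_s = (−ê + √Δ)/(2d̂) (so t_g < t_s), the function R is strictly increasing on (−∞, t_g], strictly decreasing on [t_g, t_s], and strictly increasing on [t_s, ∞); in particular t_g is a local maximizer and t_s a local minimizer of R. -/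
/-!
The derivative of `R = p₁ / p₂` is `(d̂ t² + ê t + f̂) / p₂(t)²`. Since `p₂ > 0` on `ℝ` and
`d̂ ≠ 0`, `p₂` is a genuine quadratic with negative discriminant, and the identity
`a₂² Δ = (a₂ ê − b₂ d̂)² − d̂² (b₂² − 4 a₂ c₂)` forces `Δ > 0`. So the numerator factors as
`d̂ (t − t_g)(t − t_s)`, and `R'` has the sign pattern `+, −, +` on the three intervals.
-/

open Set

section Discriminant

variable {K : Type*} [Field K] [LinearOrder K] [IsStrictOrderedRing K]

theorem discrim_neg_of_forall_pos {a b c : K} (h : ∀ t, 0 < a * t ^ 2 + b * t + c)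
    (hab : a ≠ 0 ∨ b ≠ 0) : discrim a b c < 0 := by
  have h' : ∀ t, 0 < a * (t * t) + b * t + c := fun t => by simpa only [sq] using h t
  rcases eq_or_ne a 0 with rfl | ha
  · have hb : b ≠ 0 := hab.resolve_left (not_not.2 rfl)
    have := discrim_le_zero fun t => (h' t).le
    simp only [discrim, mul_zero, zero_mul, sub_zero] at this
    exact absurd this (not_le.2 (by positivity))
  · exact discrim_lt_zero ha h'

theorem discrim_quotient_deriv_numerator_pos {a₁ b₁ c₁ a₂ b₂ c₂ : K} (h₂ : discrim a₂ b₂ c₂ < 0)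
    (hd : a₁ * b₂ - a₂ * b₁ ≠ 0) :
    0 < discrim (a₁ * b₂ - a₂ * b₁) (2 * (a₁ * c₂ - a₂ * c₁)) (b₁ * c₂ - b₂ * c₁) := by
  set d := a₁ * b₂ - a₂ * b₁
  set e := 2 * (a₁ * c₂ - a₂ * c₁)
  have ha₂ : a₂ ≠ 0 := by
    rintro rfl
    simp only [discrim, mul_zero, zero_mul, sub_zero] at h₂
    exact (sq_nonneg b₂).not_gt h₂
  have key : a₂ ^ 2 * discrim d e (b₁ * c₂ - b₂ * c₁)
      = (a₂ * e - b₂ * d) ^ 2 - d ^ 2 * discrim a₂ b₂ c₂ := by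
    simp only [d, e, discrim]; ring
  have : 0 < a₂ ^ 2 * discrim d e (b₁ * c₂ - b₂ * c₁) := by
    rw [key]
    linarith [sq_nonneg (a₂ * e - b₂ * d), mul_pos (sq_pos_of_ne_zero hd) (neg_pos.2 h₂)]
  exact pos_of_mul_pos_right this (sq_nonneg a₂)

end Discriminant

theorem quadratic_eq_mul_sub_mul_sub {K : Type*} [Field K] [NeZero (2 : K)] {a b c s : K}
    (ha : a ≠ 0) (h : discrim a b c = s * s) (x : K) :
    a * x ^ 2 + b * x + c = a * ((x - (-b - s) / (2 * a)) * (x - (-b + s) / (2 * a))) := by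
  rw [discrim] at h
  field_simp
  linear_combination -h

theorem hasDerivAt_div_quadratic {a₁ b₁ c₁ a₂ b₂ c₂ t : ℝ} (h : a₂ * t ^ 2 + b₂ * t + c₂ ≠ 0) :
    HasDerivAt (fun x => (a₁ * x ^ 2 + b₁ * x + c₁) / (a₂ * x ^ 2 + b₂ * x + c₂))
      (((a₁ * b₂ - a₂ * b₁) * t ^ 2 + 2 * (a₁ * c₂ - a₂ * c₁) * t + (b₁ * c₂ - b₂ * c₁))
        / (a₂ * t ^ 2 + b₂ * t + c₂) ^ 2) t := by
  have quad : ∀ a b c : ℝ, HasDerivAt (fun x => a * x ^ 2 + b * x + c) (2 * a * t + b) t :=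
    fun a b c =>
      ((((hasDerivAt_pow 2 t).const_mul a).add ((hasDerivAt_id t).const_mul b)).add_const
        c).congr_deriv (by push_cast; ring)
  exact ((quad a₁ b₁ c₁).div (quad a₂ b₂ c₂) h).congr_deriv (by ring)

section SignPattern

variable {f g : ℝ → ℝ} {r s : ℝ}

theorem strictMonoOn_Iic_of_hasDerivAt_mul_sub_mul_sub (hrs : r ≤ s)
    (hf : ∀ t, HasDerivAt f (g t * ((t - r) * (t - s))) t) (hg : ∀ t, 0 < g t) :
    StrictMonoOn f (Iic r) := by
  refine strictMonoOn_of_deriv_pos (convex_Iic r)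
    (Differentiable.continuous fun t => (hf t).differentiableAt).continuousOn fun t ht => ?_
  rw [interior_Iic, mem_Iio] at ht
  rw [(hf t).deriv]
  exact mul_pos (hg t) (mul_pos_of_neg_of_neg (by linarith) (by linarith))

theorem strictAntiOn_Icc_of_hasDerivAt_mul_sub_mul_sub
    (hf : ∀ t, HasDerivAt f (g t * ((t - r) * (t - s))) t) (hg : ∀ t, 0 < g t) :
    StrictAntiOn f (Icc r s) := by
  refine strictAntiOn_of_deriv_neg (convex_Icc r s)
    (Differentiable.continuous fun t => (hf t).differentiableAt).continuousOn fun t ht => ?_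
  rw [interior_Icc, mem_Ioo] at ht
  rw [(hf t).deriv]
  exact mul_neg_of_pos_of_neg (hg t) (mul_neg_of_pos_of_neg (by linarith) (by linarith))

theorem strictMonoOn_Ici_of_hasDerivAt_mul_sub_mul_sub (hrs : r ≤ s)
    (hf : ∀ t, HasDerivAt f (g t * ((t - r) * (t - s))) t) (hg : ∀ t, 0 < g t) :
    StrictMonoOn f (Ici s) := by
  refine strictMonoOn_of_deriv_pos (convex_Ici s)
    (Differentiable.continuous fun t => (hf t).differentiableAt).continuousOn fun t ht => ?_
  rw [interior_Ici, mem_Ioi] at ht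
  rw [(hf t).deriv]
  exact mul_pos (hg t) (mul_pos (by linarith) (by linarith))

theorem isLocalMax_of_hasDerivAt_mul_sub_mul_sub (hrs : r < s)
    (hf : ∀ t, HasDerivAt f (g t * ((t - r) * (t - s))) t) (hg : ∀ t, 0 < g t) :
    IsLocalMax f r :=
  isLocalMax_of_mono_anti (sub_one_lt r) hrs
    ((strictMonoOn_Iic_of_hasDerivAt_mul_sub_mul_sub hrs.le hf hg).monotoneOn.mono
      Ioc_subset_Iic_self)
    ((strictAntiOn_Icc_of_hasDerivAt_mul_sub_mul_sub hf hg).antitoneOn.mono Ico_subset_Icc_self)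

theorem isLocalMin_of_hasDerivAt_mul_sub_mul_sub (hrs : r < s)
    (hf : ∀ t, HasDerivAt f (g t * ((t - r) * (t - s))) t) (hg : ∀ t, 0 < g t) :
    IsLocalMin f s :=
  isLocalMin_of_anti_mono hrs (lt_add_one s)
    ((strictAntiOn_Icc_of_hasDerivAt_mul_sub_mul_sub hf hg).antitoneOn.mono Ioc_subset_Icc_self)
    ((strictMonoOn_Ici_of_hasDerivAt_mul_sub_mul_sub hrs.le hf hg).monotoneOn.mono
      Ico_subset_Ici_self)

end SignPattern

/-- Monotonicity of `R(t) = (a₁t²+b₁t+c₁)/(a₂t²+b₂t+c₂)` when `d̂ > 0`: the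
discriminant `Δ = ê² − 4d̂f̂` is positive and, with `t_g = (−ê−√Δ)/(2d̂)` and
`t_s = (−ê+√Δ)/(2d̂)`, `R` is strictly increasing on `(−∞, t_g]`, strictly decreasing on
`[t_g, t_s]`, and strictly increasing on `[t_s, ∞)`; so `t_g` is a local maximizer and
`t_s` a local minimizer. -/
theorem stmt11 (a₁ b₁ c₁ a₂ b₂ c₂ : ℝ)
    (hden : ∀ t : ℝ, 0 < a₂ * t ^ 2 + b₂ * t + c₂)
    (R : ℝ → ℝ)
    (hR : R = fun t => (a₁ * t ^ 2 + b₁ * t + c₁) / (a₂ * t ^ 2 + b₂ * t + c₂))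
    (dhat ehat fhat : ℝ)
    (hd : dhat = a₁ * b₂ - a₂ * b₁)
    (he : ehat = 2 * (a₁ * c₂ - a₂ * c₁))
    (hf : fhat = b₁ * c₂ - b₂ * c₁)
    (hdpos : 0 < dhat)
    (Δ : ℝ) (hΔdef : Δ = ehat ^ 2 - 4 * dhat * fhat)
    (tg ts : ℝ)
    (htg : tg = (-ehat - Real.sqrt Δ) / (2 * dhat))
    (hts : ts = (-ehat + Real.sqrt Δ) / (2 * dhat)) :
    0 < Δ ∧ tg < ts ∧
    StrictMonoOn R (Set.Iic tg) ∧ StrictAntiOn R (Set.Icc tg ts) ∧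
    StrictMonoOn R (Set.Ici ts) ∧
    IsLocalMax R tg ∧ IsLocalMin R ts := by
  have hnonconst : a₂ ≠ 0 ∨ b₂ ≠ 0 := by
    by_contra! h
    simp only [h.1, h.2, mul_zero, zero_mul, sub_zero] at hd
    exact hdpos.ne' hd
  have hΔ : 0 < Δ := by
    subst hΔdef hd he hf
    exact discrim_quotient_deriv_numerator_pos (discrim_neg_of_forall_pos hden hnonconst) hdpos.ne'
  have hlt : tg < ts := by
    rw [htg, hts]
    gcongr
    linarith [Real.sqrt_pos.2 hΔ]
  have hderiv : ∀ t, HasDerivAt R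
      (dhat / (a₂ * t ^ 2 + b₂ * t + c₂) ^ 2 * ((t - tg) * (t - ts))) t := fun t => by
    have hfactor := quadratic_eq_mul_sub_mul_sub (b := ehat) (c := fhat) hdpos.ne'
      (by rw [discrim, ← hΔdef, Real.mul_self_sqrt hΔ.le]) t
    rw [← htg, ← hts] at hfactor
    subst hR hd he hf
    convert hasDerivAt_div_quadratic (a₁ := a₁) (b₁ := b₁) (c₁ := c₁) (hden t).ne' using 1
    rw [hfactor]
    ring
  have hpos : ∀ t, 0 < dhat / (a₂ * t ^ 2 + b₂ * t + c₂) ^ 2 := fun t =>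
    div_pos hdpos (pow_pos (hden t) 2)
  exact ⟨hΔ, hlt, strictMonoOn_Iic_of_hasDerivAt_mul_sub_mul_sub hlt.le hderiv hpos,
    strictAntiOn_Icc_of_hasDerivAt_mul_sub_mul_sub hderiv hpos,
    strictMonoOn_Ici_of_hasDerivAt_mul_sub_mul_sub hlt.le hderiv hpos,
    isLocalMax_of_hasDerivAt_mul_sub_mul_sub hlt hderiv hpos,
    isLocalMin_of_hasDerivAt_mul_sub_mul_sub hlt hderiv hpos⟩
end

section
/- Assume a₂t² + b₂t + c₂ > 0 for all t ∈ ℝ and d̂ < 0. Then Δ = ê² − 4d̂f̂ > 0, and letting t_s = (−ê + √Δ)/(2d̂) and t_g = (−ê − √Δ)/(2d̂) (so t_s < t_g), the function R is strictly decreasing on (−∞, t_s], strictly increasing on [t_s, t_g], and strictly decreasing on [t_g, ∞); in particular t_s is a local minimizer and t_g a local maximizer of R. -/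
/-! `R'(t) = (d̂t² + êt + f̂)/q(t)²` with `q(t) = a₂t² + b₂t + c₂`. Since `a₂Δ` is the positive
definite form `a₂x² + b₂xy + c₂y²` evaluated at `(−ê, 2d̂)`, we get `Δ > 0`, so the numerator
factors as `d̂(t − t_s)(t − t_g)`; with `d̂ < 0` the sign of `R'` is `−, +, −` on the three
intervals, which gives the monotonicity and hence the two local extrema. -/

open Set

theorem hasDerivAt_quadratic (a b c x : ℝ) :
    HasDerivAt (fun t => a * t ^ 2 + b * t + c) (2 * a * x + b) x := by
  refine ((((hasDerivAt_pow 2 x).const_mul a).add ((hasDerivAt_id x).const_mul b)).add_const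
    c).congr_deriv ?_
  norm_num
  ring

theorem hasDerivAt_quadratic_div_quadratic (a₁ b₁ c₁ a₂ b₂ c₂ : ℝ) {x : ℝ}
    (hx : a₂ * x ^ 2 + b₂ * x + c₂ ≠ 0) :
    HasDerivAt (fun t => (a₁ * t ^ 2 + b₁ * t + c₁) / (a₂ * t ^ 2 + b₂ * t + c₂))
      (((a₁ * b₂ - a₂ * b₁) * x ^ 2 + 2 * (a₁ * c₂ - a₂ * c₁) * x + (b₁ * c₂ - b₂ * c₁)) /
        (a₂ * x ^ 2 + b₂ * x + c₂) ^ 2) x := by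
  refine ((hasDerivAt_quadratic a₁ b₁ c₁ x).div (hasDerivAt_quadratic a₂ b₂ c₂ x)
    hx).congr_deriv ?_
  ring

theorem quadratic_eq_mul_sub_mul_sub_s12 {d e f : ℝ} (hd : d ≠ 0) (hΔ : 0 ≤ e ^ 2 - 4 * d * f)
    (t : ℝ) :
    d * t ^ 2 + e * t + f =
      d * (t - (-e + √(e ^ 2 - 4 * d * f)) / (2 * d)) *
        (t - (-e - √(e ^ 2 - 4 * d * f)) / (2 * d)) := by
  have hsq := Real.sq_sqrt hΔ
  set s := √(e ^ 2 - 4 * d * f)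
  field_simp
  linear_combination hsq

theorem leadingCoeff_nonneg_of_forall_quadratic_pos {a b c : ℝ}
    (h : ∀ t, 0 < a * t ^ 2 + b * t + c) : 0 ≤ a := by
  have hdisc : discrim a b c ≤ 0 := discrim_le_zero fun t => by nlinarith [h t]
  have hc : 0 < c := by simpa using h 0
  rw [discrim] at hdisc
  nlinarith [sq_nonneg b]

theorem quadraticForm_pos_of_forall_quadratic_pos {a b c : ℝ}
    (h : ∀ t, 0 < a * t ^ 2 + b * t + c) (x : ℝ) {y : ℝ} (hy : y ≠ 0) :
    0 < a * x ^ 2 + b * x * y + c * y ^ 2 := by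
  have key :
      a * x ^ 2 + b * x * y + c * y ^ 2 = y ^ 2 * (a * (x / y) ^ 2 + b * (x / y) + c) := by
    field_simp
  rw [key]
  exact mul_pos (sq_pos_of_ne_zero hy) (h _)

theorem discrim_numerator_deriv_pos {a₁ b₁ c₁ a₂ b₂ c₂ : ℝ}
    (hq : ∀ t, 0 < a₂ * t ^ 2 + b₂ * t + c₂) (hd : a₁ * b₂ - a₂ * b₁ ≠ 0) :
    0 < (2 * (a₁ * c₂ - a₂ * c₁)) ^ 2 - 4 * (a₁ * b₂ - a₂ * b₁) * (b₁ * c₂ - b₂ * c₁) := by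
  set d := a₁ * b₂ - a₂ * b₁
  set e := 2 * (a₁ * c₂ - a₂ * c₁)
  have key : a₂ * (e ^ 2 - 4 * d * (b₁ * c₂ - b₂ * c₁)) =
      a₂ * (-e) ^ 2 + b₂ * (-e) * (2 * d) + c₂ * (2 * d) ^ 2 := by
    simp only [d, e]; ring
  refine pos_of_mul_pos_right ?_ (leadingCoeff_nonneg_of_forall_quadratic_pos hq)
  rw [key]
  exact quadraticForm_pos_of_forall_quadratic_pos hq _ (mul_ne_zero two_ne_zero hd)

theorem strictAntiOn_strictMonoOn_strictAntiOn_of_hasDerivAt {f g : ℝ → ℝ} {d r s : ℝ}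
    (hd : d < 0) (hrs : r ≤ s) (hg : ∀ x, 0 < g x)
    (hf : ∀ x, HasDerivAt f (d * (x - r) * (x - s) / g x) x) :
    StrictAntiOn f (Iic r) ∧ StrictMonoOn f (Icc r s) ∧ StrictAntiOn f (Ici s) := by
  have hcont (D : Set ℝ) : ContinuousOn f D := fun x _ => (hf x).continuousAt.continuousWithinAt
  have hderiv (D : Set ℝ) : ∀ x ∈ interior D, HasDerivWithinAt f _ (interior D) x :=
    fun x _ => (hf x).hasDerivWithinAt
  refine ⟨strictAntiOn_of_hasDerivWithinAt_neg (convex_Iic r) (hcont _)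
      (hderiv _) fun x hx => ?_,
    strictMonoOn_of_hasDerivWithinAt_pos (convex_Icc r s) (hcont _)
      (hderiv _) fun x hx => ?_,
    strictAntiOn_of_hasDerivWithinAt_neg (convex_Ici s) (hcont _)
      (hderiv _) fun x hx => ?_⟩
  · rw [interior_Iic, mem_Iio] at hx
    exact div_neg_of_neg_of_pos
      (mul_neg_of_pos_of_neg (mul_pos_of_neg_of_neg hd (by linarith)) (by linarith)) (hg x)
  · rw [interior_Icc, mem_Ioo] at hx
    exact div_pos
      (mul_pos_of_neg_of_neg (mul_neg_of_neg_of_pos hd (by linarith)) (by linarith)) (hg x)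
  · rw [interior_Ici, mem_Ioi] at hx
    exact div_neg_of_neg_of_pos
      (mul_neg_of_neg_of_pos (mul_neg_of_neg_of_pos hd (by linarith)) (by linarith)) (hg x)

/-- Monotonicity of `R(t) = (a₁t²+b₁t+c₁)/(a₂t²+b₂t+c₂)` when `d̂ < 0`: the
discriminant `Δ = ê² − 4d̂f̂` is positive and, with `t_s = (−ê+√Δ)/(2d̂)` and
`t_g = (−ê−√Δ)/(2d̂)`, `R` is strictly decreasing on `(−∞, t_s]`, strictly increasing on
`[t_s, t_g]`, and strictly decreasing on `[t_g, ∞)`; so `t_s` is a local minimizer and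
`t_g` a local maximizer. -/
theorem stmt12 (a₁ b₁ c₁ a₂ b₂ c₂ : ℝ)
    (hden : ∀ t : ℝ, 0 < a₂ * t ^ 2 + b₂ * t + c₂)
    (R : ℝ → ℝ)
    (hR : R = fun t => (a₁ * t ^ 2 + b₁ * t + c₁) / (a₂ * t ^ 2 + b₂ * t + c₂))
    (dhat ehat fhat : ℝ)
    (hd : dhat = a₁ * b₂ - a₂ * b₁)
    (he : ehat = 2 * (a₁ * c₂ - a₂ * c₁))
    (hf : fhat = b₁ * c₂ - b₂ * c₁)
    (hdneg : dhat < 0)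
    (Δ : ℝ) (hΔdef : Δ = ehat ^ 2 - 4 * dhat * fhat)
    (ts tg : ℝ)
    (hts : ts = (-ehat + Real.sqrt Δ) / (2 * dhat))
    (htg : tg = (-ehat - Real.sqrt Δ) / (2 * dhat)) :
    0 < Δ ∧ ts < tg ∧
    StrictAntiOn R (Set.Iic ts) ∧ StrictMonoOn R (Set.Icc ts tg) ∧
    StrictAntiOn R (Set.Ici tg) ∧
    IsLocalMin R ts ∧ IsLocalMax R tg := by
  have hΔ : 0 < Δ := by
    subst hΔdef hd he hf
    exact discrim_numerator_deriv_pos hden hdneg.ne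
  have hlt : ts < tg := by
    rw [hts, htg, div_lt_div_right_of_neg (by linarith)]
    linarith [Real.sqrt_pos.mpr hΔ]
  have hR' (x : ℝ) :
      HasDerivAt R (dhat * (x - ts) * (x - tg) / (a₂ * x ^ 2 + b₂ * x + c₂) ^ 2) x := by
    subst hts htg hΔdef
    rw [← quadratic_eq_mul_sub_mul_sub_s12 hdneg.ne hΔ.le, hR, hd, he, hf]
    exact hasDerivAt_quadratic_div_quadratic a₁ b₁ c₁ a₂ b₂ c₂ (hden x).ne'
  obtain ⟨hanti, hmono, hanti'⟩ :=
    strictAntiOn_strictMonoOn_strictAntiOn_of_hasDerivAt hdneg hlt.le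
      (fun x => pow_pos (hden x) 2) hR'
  exact ⟨hΔ, hlt, hanti, hmono, hanti',
    isLocalMin_of_anti_mono' self_mem_nhdsWithin (Icc_mem_nhdsGE hlt) hanti.antitoneOn
      hmono.monotoneOn,
    isLocalMax_of_mono_anti' (Icc_mem_nhdsLE hlt) self_mem_nhdsWithin hmono.monotoneOn
      hanti'.antitoneOn⟩
end

section
/- Let N be a positive integer, M₁ an N×N Hermitian positive semidefinite matrix, and M₂ an N×N Hermitian positive definite matrix. Then for all nonzero x, q ∈ ℂ^N, (x† M₁ x)/(x† M₂ x) ≥ 2·Re(q† M₁ x)/(q† M₂ q) − (q† M₁ q)·(x† M₂ x)/(q† M₂ q)², with equality when x = q; that is, the right-hand side (the first-order expansion of the jointly convex fractional function at q) is a global lower bound for the Rayleigh-type quotient. -/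
open Matrix
open scoped ComplexOrder

lemma herm_sym {N : ℕ} {M : Matrix (Fin N) (Fin N) ℂ} (hM : M.IsHermitian)
    (x q : Fin N → ℂ) :
    star (star q ⬝ᵥ M.mulVec x) = star x ⬝ᵥ M.mulVec q := by
  rw [← star_dotProduct_star, star_star, star_mulVec, hM.eq, dotProduct_mulVec]

/-- Minorization of the Rayleigh-type quotient: for `M₁` Hermitian PSD and `M₂`
Hermitian PD, the first-order expansion at `q` is a global lower bound,
`(x†M₁x)/(x†M₂x) ≥ 2Re(q†M₁x)/(q†M₂q) − (q†M₁q)(x†M₂x)/(q†M₂q)²`, with equality at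
`x = q`. -/
theorem stmt16 (N : ℕ) (hN : 0 < N)
    (M₁ M₂ : Matrix (Fin N) (Fin N) ℂ)
    (hM₁ : M₁.PosSemidef) (hM₂ : M₂.PosDef) :
    (∀ x q : Fin N → ℂ, x ≠ 0 → q ≠ 0 →
      2 * (star q ⬝ᵥ M₁.mulVec x).re / (star q ⬝ᵥ M₂.mulVec q).re
        - (star q ⬝ᵥ M₁.mulVec q).re * (star x ⬝ᵥ M₂.mulVec x).re /
            ((star q ⬝ᵥ M₂.mulVec q).re) ^ 2
      ≤ (star x ⬝ᵥ M₁.mulVec x).re / (star x ⬝ᵥ M₂.mulVec x).re) ∧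
    (∀ q : Fin N → ℂ, q ≠ 0 →
      2 * (star q ⬝ᵥ M₁.mulVec q).re / (star q ⬝ᵥ M₂.mulVec q).re
        - (star q ⬝ᵥ M₁.mulVec q).re * (star q ⬝ᵥ M₂.mulVec q).re /
            ((star q ⬝ᵥ M₂.mulVec q).re) ^ 2
      = (star q ⬝ᵥ M₁.mulVec q).re / (star q ⬝ᵥ M₂.mulVec q).re) := by
  constructor
  · intro x q hx hq
    set a := (star x ⬝ᵥ M₁.mulVec x).re with ha
    set r := (star q ⬝ᵥ M₁.mulVec x).re with hr
    set d := (star q ⬝ᵥ M₁.mulVec q).re with hd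
    set b := (star x ⬝ᵥ M₂.mulVec x).re with hb
    set c := (star q ⬝ᵥ M₂.mulVec q).re with hc
    have hb0 : 0 < b := hM₂.re_dotProduct_pos hx
    have hc0 : 0 < c := hM₂.re_dotProduct_pos hq
    have hr' : (star x ⬝ᵥ M₁.mulVec q).re = r := by
      rw [← herm_sym hM₁.1 x q, Complex.star_def, Complex.conj_re]
    have key : 0 ≤ c ^ 2 * a - 2 * (b * c) * r + b ^ 2 * d := by
      have h0 := hM₁.re_dotProduct_nonneg ((c : ℂ) • x - (b : ℂ) • q)
      have hexp : star ((c : ℂ) • x - (b : ℂ) • q) ⬝ᵥ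
          M₁.mulVec ((c : ℂ) • x - (b : ℂ) • q)
          = ((c^2 : ℝ) : ℂ) * (star x ⬝ᵥ M₁.mulVec x)
            - ((b * c : ℝ) : ℂ) * (star x ⬝ᵥ M₁.mulVec q)
            - ((b * c : ℝ) : ℂ) * (star q ⬝ᵥ M₁.mulVec x)
            + ((b^2 : ℝ) : ℂ) * (star q ⬝ᵥ M₁.mulVec q) := by
        simp only [star_sub, star_smul, mulVec_sub, Matrix.mulVec_smul, sub_dotProduct,
          dotProduct_sub, smul_dotProduct, dotProduct_smul, smul_eq_mul,
          Complex.star_def, Complex.conj_ofReal, map_ofNat, RingHom.id_apply]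
        push_cast
        ring
      rw [hexp] at h0
      simp only [RCLike.re_to_complex, Complex.add_re, Complex.sub_re, Complex.re_ofReal_mul, ← ha, ← hr, ← hd,
        hr'] at h0
      linarith
    have heq : a / b - (2 * r / c - d * b / c ^ 2)
        = (c ^ 2 * a - 2 * (b * c) * r + b ^ 2 * d) / (b * c ^ 2) := by
      field_simp
      ring
    have h2 : 0 ≤ a / b - (2 * r / c - d * b / c ^ 2) := by
      rw [heq]; positivity
    linarith
  · intro q hq
    have hc0 : 0 < (star q ⬝ᵥ M₂.mulVec q).re := hM₂.re_dotProduct_pos hq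
    field_simp
    ring
end

section
/- Let L ≤ U be real numbers, K ≥ 1, and for k = 1,…,K let a_k, b_k, c_k ∈ ℝ and S_k = { t ∈ ℝ : a_k t² + b_k t + c_k ≤ 0 }. Then the set F = [L, U] ∩ ⋂_{k=1}^{K} S_k is a union of at most K + 1 pairwise disjoint closed intervals: there exist an integer n with 0 ≤ n ≤ K + 1 and real numbers l₁ ≤ u₁ < l₂ ≤ u₂ < … < l_n ≤ u_n such that F = ⋃_{i=1}^{n} [l_i, u_i] (the union being empty when n = 0). -/
/-!
Completing the square, each constraint set `{t | a t² + b t + c ≤ 0}` is either closed and convex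
(`∅`, `ℝ`, a closed ray or a closed interval) or, when `a < 0` and the discriminant is positive,
the union `(-∞, r₁] ∪ [r₂, ∞)` of two rays with `r₁ < r₂`. Intersecting a union of `m` separated
closed intervals with a closed convex set clips each interval and leaves at most `m` of them; the
two-ray set splits each interval into a part left of `r₁` and a part right of `r₂`, and only one
interval can reach across the gap `(r₁, r₂)`, so at most `m + 1` remain. Starting from `[L, U]`,
the `K` constraints leave at most `K + 1` intervals.
-/

open Set

lemma Icc_min_eq_inter_Iic {α : Type*} [LinearOrder α] (a b r : α) :
    Icc a (min b r) = Icc a b ∩ Iic r := by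
  rw [← Ici_inter_Iic, ← Ici_inter_Iic, inter_assoc, Iic_inter_Iic]

lemma Icc_max_eq_inter_Ici {α : Type*} [LinearOrder α] (a b r : α) :
    Icc (max a r) b = Icc a b ∩ Ici r := by
  rw [← Ici_inter_Iic, ← Ici_inter_Iic, inter_right_comm, Ici_inter_Ici]

def IsIntervalChain (I : List (ℝ × ℝ)) : Prop :=
  (∀ p ∈ I, p.1 ≤ p.2) ∧ I.Pairwise fun p q => p.2 < q.1

def chainUnion (I : List (ℝ × ℝ)) : Set ℝ :=
  ⋃ p ∈ I, Icc p.1 p.2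

def IsUnionOfIcc (n : ℕ) (F : Set ℝ) : Prop :=
  ∃ I : List (ℝ × ℝ), IsIntervalChain I ∧ I.length ≤ n ∧ F = chainUnion I

noncomputable def clip (f : ℝ × ℝ → ℝ × ℝ) (I : List (ℝ × ℝ)) : List (ℝ × ℝ) :=
  (I.map f).filter fun p => p.1 ≤ p.2

section Chain

variable {I J : List (ℝ × ℝ)} {f : ℝ × ℝ → ℝ × ℝ}

lemma IsIntervalChain.clip (hI : IsIntervalChain I) (hl : ∀ p, p.1 ≤ (f p).1)
    (hu : ∀ p, (f p).2 ≤ p.2) : IsIntervalChain (clip f I) := by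
  refine ⟨fun p hp => by simpa using (List.mem_filter.mp hp).2, ?_⟩
  exact (List.pairwise_map.mpr <|
    hI.2.imp fun {p q} h => (hu p).trans_lt (h.trans_le (hl q))).filter _

lemma chainUnion_clip {C : Set ℝ} (hC : ∀ p, Icc (f p).1 (f p).2 = Icc p.1 p.2 ∩ C) :
    chainUnion (clip f I) = chainUnion I ∩ C := by
  ext t
  simp only [chainUnion, _root_.clip, mem_iUnion, List.mem_filter, List.mem_map,
    decide_eq_true_eq, exists_prop, mem_inter_iff]
  constructor
  · rintro ⟨_, ⟨⟨p, hp, rfl⟩, -⟩, ht⟩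
    rw [hC] at ht
    exact ⟨⟨p, hp, ht.1⟩, ht.2⟩
  · rintro ⟨⟨p, hp, htp⟩, htC⟩
    have ht : t ∈ Icc (f p).1 (f p).2 := hC p ▸ ⟨htp, htC⟩
    exact ⟨f p, ⟨⟨p, hp, rfl⟩, ht.1.trans ht.2⟩, ht⟩

lemma length_clip : (clip f I).length = I.countP fun p => (f p).1 ≤ (f p).2 := by
  rw [_root_.clip, ← List.countP_eq_length_filter, List.countP_map]
  rfl

lemma IsIntervalChain.append (hI : IsIntervalChain I) (hJ : IsIntervalChain J)
    (h : ∀ x ∈ chainUnion I, ∀ y ∈ chainUnion J, x < y) : IsIntervalChain (I ++ J) := by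
  refine ⟨fun p hp => (List.mem_append.mp hp).elim (hI.1 p) (hJ.1 p),
    List.pairwise_append.mpr ⟨hI.2, hJ.2, fun p hp q hq => h _ ?_ _ ?_⟩⟩
  · exact mem_biUnion hp ⟨hI.1 p hp, le_rfl⟩
  · exact mem_biUnion hq ⟨le_rfl, hJ.1 q hq⟩

lemma chainUnion_append : chainUnion (I ++ J) = chainUnion I ∪ chainUnion J := by
  simp only [chainUnion, List.mem_append, iUnion_or, iUnion_union_distrib]

-- Only one interval can start at or before `r₁` and end at or after `r₂`.
lemma countP_fst_le_add_countP_le_snd (hI : I.Pairwise fun p q => p.2 < q.1) {r₁ r₂ : ℝ}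
    (hr : r₁ < r₂) :
    I.countP (fun p => p.1 ≤ r₁) + I.countP (fun p => r₂ ≤ p.2) ≤ I.length + 1 := by
  induction I with
  | nil => simp
  | cons p I ih =>
    obtain ⟨hp, hI⟩ := List.pairwise_cons.mp hI
    have := ih hI
    simp only [List.countP_cons, List.length_cons, decide_eq_true_eq]
    by_cases h₁ : p.1 ≤ r₁ <;> by_cases h₂ : r₂ ≤ p.2 <;> simp only [h₁, h₂, if_true, if_false]
    · have hzero : I.countP (fun p => p.1 ≤ r₁) = 0 :=
        List.countP_eq_zero.mpr fun q hq => by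
          simpa using hr.trans_le (h₂.trans (hp q hq).le)
      have := I.countP_le_length (p := fun p => r₂ ≤ p.2)
      omega
    all_goals omega

end Chain

lemma exists_quadratic_eq_mul_sq_sub {a : ℝ} (b c : ℝ) (ha : a ≠ 0) :
    ∃ m q : ℝ, ∀ t, a * t ^ 2 + b * t + c = a * ((t - m) ^ 2 - q) :=
  ⟨-b / (2 * a), (b ^ 2 - 4 * a * c) / (2 * a) ^ 2, fun t => by field_simp; ring⟩

lemma setOf_sq_sub_le_eq_Icc {q : ℝ} (hq : 0 ≤ q) (m : ℝ) :
    {t : ℝ | (t - m) ^ 2 ≤ q} = Icc (m - √q) (m + √q) := by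
  ext t
  rw [mem_ofPred_eq, Real.sq_le hq, mem_Icc]
  constructor <;> rintro ⟨h₁, h₂⟩ <;> constructor <;> linarith

lemma setOf_le_sq_sub_eq (q m : ℝ) :
    {t : ℝ | q ≤ (t - m) ^ 2} = Iic (m - √q) ∪ Ici (m + √q) := by
  ext t
  rw [mem_ofPred_eq, ← Real.sqrt_le_sqrt_iff (sq_nonneg _), Real.sqrt_sq_eq_abs, le_abs',
    mem_union, mem_Iic, mem_Ici]
  constructor <;> rintro (h | h) <;> [left; right; left; right] <;> linarith

lemma isUnionOfIcc_empty (n : ℕ) : IsUnionOfIcc n ∅ :=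
  ⟨[], ⟨by simp, by simp⟩, by simp, by simp [chainUnion]⟩

lemma isUnionOfIcc_Icc (x y : ℝ) : IsUnionOfIcc 1 (Icc x y) := by
  by_cases hxy : x ≤ y
  · exact ⟨[(x, y)], ⟨by simpa using hxy, by simp⟩, by simp, by simp [chainUnion]⟩
  · exact Icc_eq_empty hxy ▸ isUnionOfIcc_empty 1

namespace IsUnionOfIcc

variable {n m : ℕ} {F : Set ℝ}

lemma mono (hF : IsUnionOfIcc n F) (hnm : n ≤ m) : IsUnionOfIcc m F :=
  let ⟨I, hI, hn, hFI⟩ := hF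
  ⟨I, hI, hn.trans hnm, hFI⟩

lemma inter_Iic (hF : IsUnionOfIcc n F) (r : ℝ) : IsUnionOfIcc n (F ∩ Iic r) := by
  obtain ⟨I, hI, hn, rfl⟩ := hF
  exact ⟨clip (fun p => (p.1, min p.2 r)) I,
    hI.clip (fun _ => le_rfl) (fun _ => min_le_left _ _),
    length_clip ▸ List.countP_le_length.trans hn,
    (chainUnion_clip fun p => Icc_min_eq_inter_Iic _ _ _).symm⟩

lemma inter_Ici (hF : IsUnionOfIcc n F) (r : ℝ) : IsUnionOfIcc n (F ∩ Ici r) := by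
  obtain ⟨I, hI, hn, rfl⟩ := hF
  exact ⟨clip (fun p => (max p.1 r, p.2)) I,
    hI.clip (fun _ => le_max_left _ _) (fun _ => le_rfl),
    length_clip ▸ List.countP_le_length.trans hn,
    (chainUnion_clip fun p => Icc_max_eq_inter_Ici _ _ _).symm⟩

lemma inter_Icc (hF : IsUnionOfIcc n F) (x y : ℝ) : IsUnionOfIcc n (F ∩ Icc x y) := by
  simpa only [← Ici_inter_Iic, inter_assoc] using (hF.inter_Ici x).inter_Iic y

lemma inter_Iic_union_Ici (hF : IsUnionOfIcc n F) {r₁ r₂ : ℝ} (hr : r₁ < r₂) :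
    IsUnionOfIcc (n + 1) (F ∩ (Iic r₁ ∪ Ici r₂)) := by
  obtain ⟨I, hI, hn, rfl⟩ := hF
  set J₁ := clip (fun p => (p.1, min p.2 r₁)) I
  set J₂ := clip (fun p => (max p.1 r₂, p.2)) I
  have hJ₁ : chainUnion J₁ = chainUnion I ∩ Iic r₁ :=
    chainUnion_clip fun p => Icc_min_eq_inter_Iic _ _ _
  have hJ₂ : chainUnion J₂ = chainUnion I ∩ Ici r₂ :=
    chainUnion_clip fun p => Icc_max_eq_inter_Ici _ _ _
  have hlen₁ : J₁.length ≤ I.countP fun p => p.1 ≤ r₁ :=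
    length_clip ▸ List.countP_mono_left fun p _ => by simp +contextual
  have hlen₂ : J₂.length ≤ I.countP fun p => r₂ ≤ p.2 :=
    length_clip ▸ List.countP_mono_left fun p _ => by simp +contextual
  refine ⟨J₁ ++ J₂, ?_, ?_, ?_⟩
  · have hc₁ : IsIntervalChain J₁ := hI.clip (fun _ => le_rfl) (fun _ => min_le_left _ _)
    have hc₂ : IsIntervalChain J₂ := hI.clip (fun _ => le_max_left _ _) (fun _ => le_rfl)
    refine hc₁.append hc₂ fun x hx y hy => ?_
    rw [hJ₁] at hx
    rw [hJ₂] at hy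
    exact (hx.2.trans_lt hr).trans_le hy.2
  · have := countP_fst_le_add_countP_le_snd hI.2 hr
    rw [List.length_append]
    omega
  · rw [chainUnion_append, hJ₁, hJ₂, inter_union_distrib_left]

lemma inter_linear (hF : IsUnionOfIcc n F) (b c : ℝ) :
    IsUnionOfIcc n (F ∩ {t | b * t + c ≤ 0}) := by
  rcases lt_trichotomy b 0 with hb | rfl | hb
  · convert hF.inter_Ici (-c / b) using 2
    ext t
    rw [mem_ofPred_eq, mem_Ici, div_le_iff_of_neg hb]
    constructor <;> intro <;> linarith
  · by_cases hc : c ≤ 0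
    · simpa [hc] using hF
    · simpa [hc] using isUnionOfIcc_empty _
  · convert hF.inter_Iic (-c / b) using 2
    ext t
    rw [mem_ofPred_eq, mem_Iic, le_div_iff₀ hb]
    constructor <;> intro <;> linarith

lemma inter_quadratic (hF : IsUnionOfIcc n F) (a b c : ℝ) :
    IsUnionOfIcc (n + 1) (F ∩ {t | a * t ^ 2 + b * t + c ≤ 0}) := by
  obtain rfl | ha := eq_or_ne a 0
  · simpa using (hF.inter_linear b c).mono n.le_succ
  obtain ⟨m, q, hmq⟩ := exists_quadratic_eq_mul_sq_sub b c ha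
  simp only [hmq]
  rcases ha.lt_or_gt with ha | ha
  · simp only [mul_nonpos_iff_neg_imp_nonneg, ha, ha.le, sub_nonneg, true_imp_iff, implies_true,
      and_true]
    by_cases hq : q ≤ 0
    · simpa [hq.trans (sq_nonneg _)] using hF.mono n.le_succ
    · rw [setOf_le_sq_sub_eq]
      exact hF.inter_Iic_union_Ici (by linarith [Real.sqrt_pos.mpr (not_le.mp hq)])
  · simp only [mul_nonpos_iff_pos_imp_nonpos, ha, ha.le, sub_nonpos, true_imp_iff, implies_true,
      and_true]
    by_cases hq : 0 ≤ q
    · rw [setOf_sq_sub_le_eq_Icc hq]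
      exact (hF.inter_Icc _ _).mono n.le_succ
    · simpa [(not_le.mp hq).trans_le (sq_nonneg _)|>.not_ge] using isUnionOfIcc_empty _

lemma inter_biInter_quadratic {ι : Type*} (hF : IsUnionOfIcc n F) (s : Finset ι)
    (a b c : ι → ℝ) :
    IsUnionOfIcc (n + s.card) (F ∩ ⋂ k ∈ s, {t | a k * t ^ 2 + b k * t + c k ≤ 0}) := by
  classical
  induction s using Finset.induction_on with
  | empty => simpa using hF
  | insert k s hk ih =>
    rw [Finset.set_biInter_insert, inter_comm {t | _ ≤ 0}, ← inter_assoc,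
      Finset.card_insert_of_notMem hk, ← add_assoc]
    exact ih.inter_quadratic (a k) (b k) (c k)

lemma exists_fin (hF : IsUnionOfIcc n F) :
    ∃ m ≤ n, ∃ l u : Fin m → ℝ, (∀ i, l i ≤ u i) ∧ (∀ i j : Fin m, i < j → u i < l j) ∧
      F = ⋃ i : Fin m, Icc (l i) (u i) := by
  obtain ⟨I, ⟨hle, hlt⟩, hn, rfl⟩ := hF
  refine ⟨I.length, hn, fun i => (I.get i).1, fun i => (I.get i).2,
    fun i => hle _ (I.get_mem i), List.pairwise_iff_get.mp hlt, ?_⟩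
  rw [← biUnion_range (g := fun p : ℝ × ℝ => Icc p.1 p.2), range_list_get]
  rfl

end IsUnionOfIcc

theorem stmt19_general (L U : ℝ) (K : ℕ)
    (a b c : Fin K → ℝ)
    (F : Set ℝ)
    (hF : F = Icc L U ∩ ⋂ k : Fin K, {t : ℝ | a k * t ^ 2 + b k * t + c k ≤ 0}) :
    ∃ (n : ℕ), n ≤ K + 1 ∧ ∃ l u : Fin n → ℝ,
      (∀ i, l i ≤ u i) ∧
      (∀ i j : Fin n, i < j → u i < l j) ∧
      F = ⋃ i : Fin n, Icc (l i) (u i) := by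
  have h := (isUnionOfIcc_Icc L U).inter_biInter_quadratic Finset.univ a b c
  rw [Finset.card_univ, Fintype.card_fin, add_comm] at h
  simpa only [Finset.mem_univ, iInter_true, ← hF] using h.exists_fin

/-- The feasible set cut out of `[L, U]` by `K` quadratic constraints
`a_k t² + b_k t + c_k ≤ 0` is a union of at most `K + 1` pairwise disjoint, ordered
closed intervals. -/
theorem stmt19 (L U : ℝ) (hLU : L ≤ U) (K : ℕ) (hK : 1 ≤ K)
    (a b c : Fin K → ℝ)
    (F : Set ℝ)
    (hF : F = Icc L U ∩ ⋂ k : Fin K, {t : ℝ | a k * t ^ 2 + b k * t + c k ≤ 0}) :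
    ∃ (n : ℕ), n ≤ K + 1 ∧ ∃ l u : Fin n → ℝ,
      (∀ i, l i ≤ u i) ∧
      (∀ i j : Fin n, i < j → u i < l j) ∧
      F = ⋃ i : Fin n, Icc (l i) (u i) :=
  stmt19_general L U K a b c F hF
end
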